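/- arXiv:2006.04313 — 10 statements merged into one kernel-verified Lean document; each statement's English description precedes it below -/
import Mathlib

section
/- Let E be a finite set and f : 2^E → ℝ a submodular set function with multilinear extension F. Then F is concave along nonnegative directions: for every y ∈ [0,1]^E, every pair of distinct elements e_1, e_2 ∈ E, and every δ_1, δ_2 ≥ 0 such that y + δ_1·1_{e_1} + δ_2·1_{e_2} ∈ [0,1]^E, one has F(y + δ_1 1_{e_1} + δ_2 1_{e_2}) − F(y + δ_1 1_{e_1}) − F(y + δ_2 1_{e_2}) + F(y) ≤ 0. -/
/-!
Along the plane spanned by `1_{e₁}` and `1_{e₂}` the multilinear extension is affine in each of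
the two coordinates, so its mixed second difference is `δ₁ δ₂` times the mixed partial derivative
`∂²F/∂y_{e₁}∂y_{e₂} = 𝔼[f(R + e₁ + e₂) - f(R + e₁) - f(R + e₂) + f(R)]`, where `R` is the random
subset of `E ∖ {e₁, e₂}` containing each `e` independently with probability `y e`. Submodularity
makes every term of this expectation nonpositive.
-/

open Finset

namespace MultilinearExtension

variable {α : Type*} [DecidableEq α]

def IsSubmodular (f : Finset α → ℝ) : Prop :=
  ∀ (A B : Finset α) (e : α), A ⊆ B → e ∉ B → f (insert e B) - f B ≤ f (insert e A) - f A

theorem IsSubmodular.insert_insert_sub_le {f : Finset α → ℝ}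
    (hf : IsSubmodular f) {a b : α} {T : Finset α} (ha : a ∉ T) (hab : a ≠ b) :
    f (insert a (insert b T)) - f (insert a T) - f (insert b T) + f T ≤ 0 := by
  have := hf T (insert b T) a (subset_insert b T) (by simp [ha, hab])
  linarith

def bump (y : α → ℝ) (e : α) (δ : ℝ) : α → ℝ :=
  fun e' => y e' + if e' = e then δ else 0

@[simp]
theorem bump_apply_self (y : α → ℝ) (e : α) (δ : ℝ) : bump y e δ e = y e + δ := by
  simp [bump]

@[simp]
theorem bump_apply_of_ne (y : α → ℝ) {e e' : α} (δ : ℝ) (h : e' ≠ e) :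
    bump y e δ e' = y e' := by
  simp [bump, h]

def mixedDiff (G : (α → ℝ) → ℝ) (y : α → ℝ) (e₁ : α) (δ₁ : ℝ) (e₂ : α)
    (δ₂ : ℝ) : ℝ :=
  G (bump (bump y e₁ δ₁) e₂ δ₂) - G (bump y e₁ δ₁) - G (bump y e₂ δ₂) + G y

theorem mixedDiff_sum_mul {ι : Type*} (s : Finset ι) (c : ι → ℝ)
    (G : ι → (α → ℝ) → ℝ) (y : α → ℝ) (e₁ : α) (δ₁ : ℝ) (e₂ : α) (δ₂ : ℝ) :
    mixedDiff (fun z => ∑ i ∈ s, c i * G i z) y e₁ δ₁ e₂ δ₂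
      = ∑ i ∈ s, c i * mixedDiff (G i) y e₁ δ₁ e₂ δ₂ := by
  simp only [mixedDiff, ← sum_sub_distrib, ← sum_add_distrib, mul_sub, mul_add]

theorem prod_bump_of_notMem {M : Type*} [CommMonoid M] {s : Finset α} {a : α}
    (ha : a ∉ s) (φ : α → ℝ → M) (z : α → ℝ) (δ : ℝ) :
    ∏ e ∈ s, φ e (bump z a δ e) = ∏ e ∈ s, φ e (z e) :=
  prod_congr rfl fun e he => by rw [bump_apply_of_ne z δ (ne_of_mem_of_not_mem he ha)]

theorem prod_ite_insert_of_notMem {M : Type*} [CommMonoid M] {s S : Finset α}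
    {a : α} (ha : a ∉ s) (g h : α → M) :
    ∏ e ∈ s, (if e ∈ insert a S then g e else h e) = ∏ e ∈ s, if e ∈ S then g e else h e :=
  prod_congr rfl fun e he => by simp only [mem_insert, ne_of_mem_of_not_mem he ha, false_or]

variable [Fintype α]

def weight (S : Finset α) (z : α → ℝ) : ℝ :=
  (∏ e ∈ S, z e) * ∏ e ∈ Sᶜ, (1 - z e)

theorem weight_eq_prod_ite (S : Finset α) (z : α → ℝ) :
    weight S z = ∏ e, if e ∈ S then z e else 1 - z e := by
  rw [weight, prod_ite, filter_mem_eq_inter, univ_inter, compl_eq_univ_sdiff,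
    filter_notMem_eq_sdiff]

theorem weight_eq_mul_mul_prod_compl_pair {e₁ e₂ : α} (hne : e₁ ≠ e₂) (S : Finset α)
    (z : α → ℝ) :
    weight S z = (if e₁ ∈ S then z e₁ else 1 - z e₁) * (if e₂ ∈ S then z e₂ else 1 - z e₂) *
      ∏ e ∈ {e₁, e₂}ᶜ, if e ∈ S then z e else 1 - z e := by
  rw [weight_eq_prod_ite, ← prod_mul_prod_compl {e₁, e₂}, prod_pair hne]

theorem mixedDiff_weight {e₁ e₂ : α} (hne : e₁ ≠ e₂) (S : Finset α) (y : α → ℝ) (δ₁ δ₂ : ℝ) :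
    mixedDiff (weight S) y e₁ δ₁ e₂ δ₂ = δ₁ * δ₂ *
      ((if e₁ ∈ S then 1 else -1) * (if e₂ ∈ S then 1 else -1) *
        ∏ e ∈ {e₁, e₂}ᶜ, if e ∈ S then y e else 1 - y e) := by
  -- the factor `if e ∈ S then t else 1 - t` at `e₁` and at `e₂` is affine in `t` with slope `±1`
  have rest (a : α) (ha : a ∈ ({e₁, e₂} : Finset α)) :=
    prod_bump_of_notMem (notMem_compl.2 ha) (fun e t => if e ∈ S then t else 1 - t)
  simp only [mixedDiff, weight_eq_mul_mul_prod_compl_pair hne, rest e₁ (by simp),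
    rest e₂ (by simp), bump_apply_self, bump_apply_of_ne _ _ hne, bump_apply_of_ne _ _ hne.symm]
  split_ifs <;> ring

theorem sum_mul_sign_mul_sign_mul_nonpos {f : Finset α → ℝ} (hf : IsSubmodular f) {e₁ e₂ : α}
    (hne : e₁ ≠ e₂) (r : Finset α → ℝ) (hr : ∀ S, 0 ≤ r S) (hr₁ : ∀ S, r (insert e₁ S) = r S)
    (hr₂ : ∀ S, r (insert e₂ S) = r S) :
    ∑ S, f S * ((if e₁ ∈ S then 1 else -1) * (if e₂ ∈ S then 1 else -1) * r S) ≤ 0 := by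
  set s := ({e₁, e₂} : Finset α)ᶜ
  have huniv : (univ : Finset α) = insert e₁ (insert e₂ s) := by
    ext e; by_cases e = e₁ <;> by_cases e = e₂ <;> simp_all [s]
  have h₁ : e₁ ∉ insert e₂ s := by simp [s, hne]
  have h₂ : e₂ ∉ s := by simp [s]
  rw [← powerset_univ, huniv, sum_powerset_insert h₁, sum_powerset_insert h₂,
    sum_powerset_insert h₂, ← sum_add_distrib, ← sum_add_distrib, ← sum_add_distrib]
  refine sum_nonpos fun T hT => ?_
  have he₁ : e₁ ∉ T := fun h => h₁ (mem_insert_of_mem (mem_powerset.1 hT h))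
  have he₂ : e₂ ∉ T := fun h => h₂ (mem_powerset.1 hT h)
  have he₁' : e₁ ∉ insert e₂ T := by simp [hne, he₁]
  have he₂' : e₂ ∉ insert e₁ T := by simp [hne.symm, he₂]
  simp only [mem_insert_self, mem_insert_of_mem, if_true, if_neg he₁, if_neg he₂, if_neg he₁',
    if_neg he₂', hr₁, hr₂]
  nlinarith [hf.insert_insert_sub_le he₁ hne, hr T]

end MultilinearExtension

open MultilinearExtension in
theorem multilinear_extension_concave_along_nonneg_directions_general
    {α : Type*} [Fintype α] [DecidableEq α]
    (f : Finset α → ℝ)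
    (hsub : ∀ (A B : Finset α) (e : α), A ⊆ B → e ∉ B →
      f (insert e B) - f B ≤ f (insert e A) - f A)
    (F : (α → ℝ) → ℝ)
    (hF : ∀ z : α → ℝ,
      F z = ∑ S : Finset α, f S * ((∏ e ∈ S, z e) * ∏ e ∈ Sᶜ, (1 - z e)))
    (y : α → ℝ) (hy : ∀ e, y e ∈ Set.Icc (0 : ℝ) 1)
    (e₁ e₂ : α) (hne : e₁ ≠ e₂)
    (δ₁ δ₂ : ℝ) (hδ₁ : 0 ≤ δ₁) (hδ₂ : 0 ≤ δ₂) :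
    F (fun e => y e + (if e = e₁ then δ₁ else 0) + (if e = e₂ then δ₂ else 0))
      - F (fun e => y e + (if e = e₁ then δ₁ else 0))
      - F (fun e => y e + (if e = e₂ then δ₂ else 0))
      + F y ≤ 0 := by
  change mixedDiff F y e₁ δ₁ e₂ δ₂ ≤ 0
  obtain rfl : F = fun z => ∑ S, f S * weight S z := funext hF
  simp only [mixedDiff_sum_mul, mixedDiff_weight hne, mul_left_comm (f _) (δ₁ * δ₂), ← mul_sum]
  have hr (S : Finset α) : 0 ≤ ∏ e ∈ {e₁, e₂}ᶜ, if e ∈ S then y e else 1 - y e :=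
    prod_nonneg fun e _ => by
      obtain ⟨h0, h1⟩ := hy e
      split_ifs <;> linarith
  exact mul_nonpos_of_nonneg_of_nonpos (mul_nonneg hδ₁ hδ₂)
    (sum_mul_sign_mul_sign_mul_nonpos hsub hne _ hr
      (fun S => prod_ite_insert_of_notMem (by simp) _ _)
      (fun S => prod_ite_insert_of_notMem (by simp) _ _))

/-- The multilinear extension of a submodular set function is concave
along nonnegative directions: the second difference along two distinct coordinates is
nonpositive. -/
theorem multilinear_extension_concave_along_nonneg_directions
    {α : Type*} [Fintype α] [DecidableEq α]
    (f : Finset α → ℝ)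
    (hsub : ∀ (A B : Finset α) (e : α), A ⊆ B → e ∉ B →
      f (insert e B) - f B ≤ f (insert e A) - f A)
    (F : (α → ℝ) → ℝ)
    (hF : ∀ z : α → ℝ,
      F z = ∑ S : Finset α, f S * ((∏ e ∈ S, z e) * ∏ e ∈ Sᶜ, (1 - z e)))
    (y : α → ℝ) (hy : ∀ e, y e ∈ Set.Icc (0 : ℝ) 1)
    (e₁ e₂ : α) (hne : e₁ ≠ e₂)
    (δ₁ δ₂ : ℝ) (hδ₁ : 0 ≤ δ₁) (hδ₂ : 0 ≤ δ₂)
    (htop : ∀ e,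
      (y e + (if e = e₁ then δ₁ else 0) + (if e = e₂ then δ₂ else 0)) ∈ Set.Icc (0 : ℝ) 1) :
    F (fun e => y e + (if e = e₁ then δ₁ else 0) + (if e = e₂ then δ₂ else 0))
      - F (fun e => y e + (if e = e₁ then δ₁ else 0))
      - F (fun e => y e + (if e = e₂ then δ₂ else 0))
      + F y ≤ 0 :=
  multilinear_extension_concave_along_nonneg_directions_general f hsub F hF y hy e₁ e₂ hne δ₁ δ₂ hδ₁
    hδ₂
end

section
/- For every finite index set I and every x ∈ [0,1]^I: (1 − 1/e)·min{1, Σ_{i∈I} x_i} ≤ 1 − ∏_{i∈I}(1 − x_i) ≤ min{1, Σ_{i∈I} x_i}. -/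
/-!
The product `∏ (1 - xᵢ)` is squeezed between the Weierstrass product inequality
`1 - ∑ xᵢ ≤ ∏ (1 - xᵢ)`, which gives the upper bound, and `∏ (1 - xᵢ) ≤ exp (-∑ xᵢ)`.
For the lower bound it then suffices that `1 - exp (-s) ≥ (1 - e⁻¹) min 1 s` for `s ≥ 0`:
on `[0, 1]` this is concavity of `s ↦ 1 - exp (-s)` compared with its chord, and for
`s ≥ 1` monotonicity.
-/

open Finset Real

theorem Finset.one_sub_sum_le_prod_one_sub {ι R : Type*} [CommRing R] [LinearOrder R]
    [IsStrictOrderedRing R] (s : Finset ι) (x : ι → R) (hx₀ : ∀ i ∈ s, 0 ≤ x i)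
    (hx₁ : ∀ i ∈ s, x i ≤ 1) : 1 - ∑ i ∈ s, x i ≤ ∏ i ∈ s, (1 - x i) := by
  classical
  induction s using Finset.induction with
  | empty => simp
  | insert a s ha ih =>
    rw [forall_mem_insert] at hx₀ hx₁
    have hsum : 0 ≤ ∑ i ∈ s, x i := sum_nonneg hx₀.2
    rw [sum_insert ha, prod_insert ha]
    calc 1 - (x a + ∑ i ∈ s, x i)
        ≤ (1 - x a) * (1 - ∑ i ∈ s, x i) := by nlinarith [mul_nonneg hx₀.1 hsum]
      _ ≤ (1 - x a) * ∏ i ∈ s, (1 - x i) :=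
          mul_le_mul_of_nonneg_left (ih hx₀.2 hx₁.2) (sub_nonneg.2 hx₁.1)

theorem Real.prod_one_sub_le_exp_neg_sum {ι : Type*} (s : Finset ι) (x : ι → ℝ)
    (hx : ∀ i ∈ s, x i ≤ 1) : ∏ i ∈ s, (1 - x i) ≤ exp (-∑ i ∈ s, x i) := by
  rw [← sum_neg_distrib, exp_sum]
  refine prod_le_prod (fun i hi => sub_nonneg.2 (hx i hi)) fun i _ => ?_
  linarith [add_one_le_exp (-x i)]

theorem Real.one_sub_inv_exp_one_mul_le_one_sub_exp_neg {s : ℝ} (h₀ : 0 ≤ s) (h₁ : s ≤ 1) :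
    (1 - (exp 1)⁻¹) * s ≤ 1 - exp (-s) := by
  have hchord := convexOn_exp.2 (Set.mem_univ (-1 : ℝ)) (Set.mem_univ (0 : ℝ)) h₀
    (sub_nonneg.2 h₁) (add_sub_cancel s 1)
  simp only [smul_eq_mul, mul_zero, add_zero, exp_zero, mul_one, mul_neg_one, exp_neg] at hchord
  rw [exp_neg]
  linarith

theorem Real.one_sub_inv_exp_one_mul_min_le_one_sub_exp_neg {s : ℝ} (hs : 0 ≤ s) :
    (1 - (exp 1)⁻¹) * min 1 s ≤ 1 - exp (-s) := by
  rcases le_total s 1 with h | h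
  · rw [min_eq_right h]
    exact one_sub_inv_exp_one_mul_le_one_sub_exp_neg hs h
  · rw [min_eq_left h, mul_one, ← exp_neg]
    exact sub_le_sub_left (exp_le_exp.2 (neg_le_neg h)) 1

/-- For `x ∈ [0,1]^I`,
`(1 − 1/e)·min{1, ∑ x_i} ≤ 1 − ∏ (1 − x_i) ≤ min{1, ∑ x_i}`. -/
theorem biconjugate_bounds {ι : Type*} (I : Finset ι) (x : ι → ℝ)
    (hx : ∀ i ∈ I, x i ∈ Set.Icc (0 : ℝ) 1) :
    (1 - (Real.exp 1)⁻¹) * min 1 (∑ i ∈ I, x i) ≤ 1 - ∏ i ∈ I, (1 - x i) ∧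
      1 - ∏ i ∈ I, (1 - x i) ≤ min 1 (∑ i ∈ I, x i) := by
  have hx₀ : ∀ i ∈ I, 0 ≤ x i := fun i hi => (hx i hi).1
  have hx₁ : ∀ i ∈ I, x i ≤ 1 := fun i hi => (hx i hi).2
  have hprod : 0 ≤ ∏ i ∈ I, (1 - x i) := prod_nonneg fun i hi => sub_nonneg.2 (hx₁ i hi)
  refine ⟨?_, le_min (by linarith) (by linarith [one_sub_sum_le_prod_one_sub I x hx₀ hx₁])⟩
  calc (1 - (exp 1)⁻¹) * min 1 (∑ i ∈ I, x i)
      ≤ 1 - exp (-∑ i ∈ I, x i) :=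
        one_sub_inv_exp_one_mul_min_le_one_sub_exp_neg (sum_nonneg hx₀)
    _ ≤ 1 - ∏ i ∈ I, (1 - x i) := sub_le_sub_left (prod_one_sub_le_exp_neg_sum I x hx₁) 1
end

section
/- Let E be a finite set and f : 2^E → ℝ≥0 a nonnegative submodular function (not necessarily monotone). Let B be the random subset of E obtained by including each element of E independently with probability 1/2. Then E[f(B)] ≥ f(E)/2. -/
/-! Submodularity applied to a set `S` and its complement gives `f E + f ∅ ≤ f S + f Sᶜ`, so
`f E ≤ f S + f Sᶜ` by nonnegativity of `f ∅`. Since `S ↦ Sᶜ` permutes the subsets of `E`,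
summing over all `S` yields `2 ^ |E| * f E ≤ 2 * ∑ S, f S`. -/

open Finset

lemma submodular_union_add_empty_le {α : Type*} [DecidableEq α] (f : Finset α → ℝ)
    (hsub : ∀ (A B : Finset α) (e : α), A ⊆ B → e ∉ B →
      f (insert e B) - f B ≤ f (insert e A) - f A)
    (A B : Finset α) (hAB : Disjoint A B) : f (A ∪ B) + f ∅ ≤ f A + f B := by
  induction A using Finset.induction_on generalizing B with
  | empty => simp [add_comm]
  | insert e A heA ih =>
    rw [disjoint_insert_left] at hAB
    have hmarginal : f (insert e (A ∪ B)) - f (A ∪ B) ≤ f (insert e A) - f A :=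
      hsub A (A ∪ B) e subset_union_left (by simp [heA, hAB.1])
    rw [insert_union]
    linarith [ih B hAB.2]

lemma two_pow_card_mul_le_two_mul_sum_of_le_add_compl {α : Type*} [Fintype α] [DecidableEq α]
    (g : Finset α → ℝ) (hg : ∀ S, g univ ≤ g S + g Sᶜ) :
    2 ^ Fintype.card α * g univ ≤ 2 * ∑ S : Finset α, g S := by
  have hcompl : ∑ S : Finset α, g Sᶜ = ∑ S : Finset α, g S :=
    Equiv.sum_comp (Function.Involutive.toPerm _ compl_involutive) g
  calc 2 ^ Fintype.card α * g univ = ∑ _S : Finset α, g univ := by simp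
    _ ≤ ∑ S : Finset α, (g S + g Sᶜ) := sum_le_sum fun S _ => hg S
    _ = 2 * ∑ S : Finset α, g S := by rw [sum_add_distrib, hcompl, two_mul]

/-- For a nonnegative submodular function `f` on a finite ground set,
the expected value of `f` at a uniformly random subset (each element included
independently with probability `1/2`) is at least `f(E)/2`. -/
theorem expected_value_uniform_random_subset {α : Type*} [Fintype α] [DecidableEq α]
    (f : Finset α → ℝ)
    (hnn : ∀ A : Finset α, 0 ≤ f A)
    (hsub : ∀ (A B : Finset α) (e : α), A ⊆ B → e ∉ B →
      f (insert e B) - f B ≤ f (insert e A) - f A) :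
    f Finset.univ / 2 ≤ (∑ S : Finset α, f S) / 2 ^ Fintype.card α := by
  have hcompl : ∀ S, f univ ≤ f S + f Sᶜ := fun S => by
    have := submodular_union_add_empty_le f hsub S Sᶜ disjoint_compl_right
    rw [union_compl] at this
    linarith [hnn ∅]
  rw [div_le_div_iff₀ two_pos (by positivity)]
  linarith [two_pow_card_mul_le_two_mul_sum_of_le_add_compl f hcompl]
end

section
/- Let A be a finite set and f : 2^A → ℝ≥0 a monotone submodular function. Let R be the random subset of A obtained by including each element i ∈ A independently with probability p_i, where p_i ≥ 1/2 for every i ∈ A. Then E[f(R)] ≥ f(A)/2. -/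
/-! The sum is the multilinear extension `F q = E[f(R_q)]` of `f` evaluated at `p`. Since `f` is
monotone, `F` is affine with nonnegative slope in each coordinate, so `F p ≥ F (1/2, …, 1/2)`, the
average of `f` over all subsets. Pairing each `S` with `Sᶜ` and using `f A ≤ f S + f Sᶜ`
(submodularity together with `f ∅ ≥ 0`) shows that this average is at least `f A / 2`. -/

open Finset

section Submodular

variable {α : Type*} [DecidableEq α]

def IsSubmodular (f : Finset α → ℝ) : Prop :=
  ∀ (S T : Finset α) (e : α), S ⊆ T → e ∉ T → f (insert e T) - f T ≤ f (insert e S) - f S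

theorem IsSubmodular.union_add_empty_le {f : Finset α → ℝ} (hf : IsSubmodular f)
    {S T : Finset α} (hST : Disjoint S T) : f (S ∪ T) + f ∅ ≤ f S + f T := by
  induction T using Finset.induction_on with
  | empty => simp
  | @insert e T heT ih =>
    rw [disjoint_insert_right] at hST
    have heST : e ∉ S ∪ T := by simp [hST.1, heT]
    have hstep := hf T (S ∪ T) e subset_union_right heST
    rw [union_insert]
    linarith [ih hST.2, hstep]

end Submodular

section MultilinearExtension

variable {α : Type*} [Fintype α] [DecidableEq α]

noncomputable def multilinearExt (f : Finset α → ℝ) (q : α → ℝ) : ℝ :=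
  ∑ S : Finset α, f S * ((∏ i ∈ S, q i) * ∏ i ∈ Sᶜ, (1 - q i))

theorem multilinearExt_const_half (f : Finset α → ℝ) :
    multilinearExt f (fun _ ↦ 1 / 2) = (∑ S : Finset α, f S) / 2 ^ Fintype.card α := by
  rw [multilinearExt, sum_div]
  refine sum_congr rfl fun S _ ↦ ?_
  rw [prod_const, prod_const, show (1 : ℝ) - 1 / 2 = 1 / 2 by norm_num, ← pow_add,
    card_add_card_compl, one_div, inv_pow, div_eq_mul_inv]

theorem div_two_le_sum_div_two_pow_card {f : Finset α → ℝ}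
    (hf : ∀ S : Finset α, f univ ≤ f S + f Sᶜ) :
    f univ / 2 ≤ (∑ S : Finset α, f S) / 2 ^ Fintype.card α := by
  have hcompl : ∑ S : Finset α, f Sᶜ = ∑ S : Finset α, f S :=
    Equiv.sum_comp (compl_involutive.toPerm _) f
  have hpairs : (2 : ℝ) ^ Fintype.card α * f univ ≤ 2 * ∑ S : Finset α, f S :=
    calc (2 : ℝ) ^ Fintype.card α * f univ = ∑ _S : Finset α, f univ := by
          simp [Fintype.card_finset]
      _ ≤ ∑ S : Finset α, (f S + f Sᶜ) := sum_le_sum fun S _ ↦ hf S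
      _ = 2 * ∑ S : Finset α, f S := by rw [sum_add_distrib, hcompl]; ring
  rw [div_le_div_iff₀ two_pos (by positivity)]
  linarith

theorem multilinearExt_eq_sum_powerset_erase (f : Finset α → ℝ) (q : α → ℝ) (i : α) :
    multilinearExt f q = ∑ S ∈ (univ.erase i).powerset,
      (∏ j ∈ S, q j) * (∏ j ∈ Sᶜ.erase i, (1 - q j)) *
        ((1 - q i) * f S + q i * f (insert i S)) := by
  have huniv : (univ : Finset (Finset α)) = (insert i (univ.erase i)).powerset := by
    rw [insert_erase (mem_univ i), powerset_univ]
  rw [multilinearExt, huniv, sum_powerset_insert (notMem_erase i _), ← sum_add_distrib]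
  refine sum_congr rfl fun S hS ↦ ?_
  have hiS : i ∉ S := fun h ↦ notMem_erase i univ (mem_powerset.1 hS h)
  rw [prod_insert hiS, compl_insert, ← mul_prod_erase Sᶜ _ (mem_compl.2 hiS)]
  ring

theorem multilinearExt_update_le {f : Finset α → ℝ} (hf : Monotone f) {q : α → ℝ}
    (hq0 : ∀ j, 0 ≤ q j) (hq1 : ∀ j, q j ≤ 1) (i : α) {s t : ℝ} (hst : s ≤ t) :
    multilinearExt f (Function.update q i s) ≤ multilinearExt f (Function.update q i t) := by
  rw [multilinearExt_eq_sum_powerset_erase _ _ i, multilinearExt_eq_sum_powerset_erase _ _ i]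
  refine sum_le_sum fun S hS ↦ ?_
  have hiS : i ∉ S := fun h ↦ notMem_erase i univ (mem_powerset.1 hS h)
  have hS_eq : ∀ x, ∏ j ∈ S, Function.update q i x j = ∏ j ∈ S, q j := fun x ↦
    prod_congr rfl fun j hj ↦ Function.update_of_ne (ne_of_mem_of_not_mem hj hiS) _ _
  have hSc_eq : ∀ x, ∏ j ∈ Sᶜ.erase i, (1 - Function.update q i x j) =
      ∏ j ∈ Sᶜ.erase i, (1 - q j) := fun x ↦
    prod_congr rfl fun j hj ↦ by rw [Function.update_of_ne (ne_of_mem_erase hj)]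
  simp only [hS_eq, hSc_eq, Function.update_self]
  have hweight : 0 ≤ (∏ j ∈ S, q j) * ∏ j ∈ Sᶜ.erase i, (1 - q j) :=
    mul_nonneg (prod_nonneg fun j _ ↦ hq0 j) (prod_nonneg fun j _ ↦ sub_nonneg.2 (hq1 j))
  have hgain : f S ≤ f (insert i S) := hf (subset_insert i S)
  refine mul_le_mul_of_nonneg_left ?_ hweight
  nlinarith [mul_nonneg (sub_nonneg.2 hst) (sub_nonneg.2 hgain)]

theorem multilinearExt_mono {f : Finset α → ℝ} (hf : Monotone f) {r q : α → ℝ}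
    (hr0 : ∀ j, 0 ≤ r j) (hrq : r ≤ q) (hq1 : ∀ j, q j ≤ 1) :
    multilinearExt f r ≤ multilinearExt f q := by
  suffices ∀ U : Finset α, multilinearExt f r ≤ multilinearExt f (U.piecewise q r) by
    simpa using this univ
  intro U
  induction U using Finset.induction_on with
  | empty => simp
  | @insert a U haU ih =>
    set m := U.piecewise q r
    have hm0 : ∀ j, 0 ≤ m j := fun j ↦ by
      by_cases hj : j ∈ U <;> simp [m, hj, hr0 j, (hr0 j).trans (hrq j)]
    have hm1 : ∀ j, m j ≤ 1 := fun j ↦ by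
      by_cases hj : j ∈ U <;> simp [m, hj, hq1 j, (hrq j).trans (hq1 j)]
    have hma : Function.update m a (r a) = m := by
      simp [m, piecewise_eq_of_notMem _ _ _ haU]
    calc multilinearExt f r ≤ multilinearExt f m := ih
      _ = multilinearExt f (Function.update m a (r a)) := by rw [hma]
      _ ≤ multilinearExt f (Function.update m a (q a)) :=
        multilinearExt_update_le hf hm0 hm1 a (hrq a)
      _ = multilinearExt f ((insert a U).piecewise q r) := by rw [piecewise_insert]

end MultilinearExtension

/-- For a nonnegative monotone submodular function `f` on a finite
ground set `A` and a random subset `R` including each element `i` independently with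
probability `p i ≥ 1/2`, one has `E[f(R)] ≥ f(A)/2`. -/
theorem expected_value_random_subset_half {α : Type*} [Fintype α] [DecidableEq α]
    (f : Finset α → ℝ)
    (hnn : ∀ S : Finset α, 0 ≤ f S)
    (hmono : ∀ S T : Finset α, S ⊆ T → f S ≤ f T)
    (hsub : ∀ (S T : Finset α) (e : α), S ⊆ T → e ∉ T →
      f (insert e T) - f T ≤ f (insert e S) - f S)
    (p : α → ℝ) (hp : ∀ i, 1 / 2 ≤ p i) (hp1 : ∀ i, p i ≤ 1) :
    f Finset.univ / 2 ≤
      ∑ S : Finset α, f S * ((∏ i ∈ S, p i) * ∏ i ∈ Sᶜ, (1 - p i)) := by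
  have hsplit : ∀ S : Finset α, f univ ≤ f S + f Sᶜ := fun S ↦ by
    have hunion := IsSubmodular.union_add_empty_le hsub (disjoint_compl_right (a := S))
    rw [union_compl] at hunion
    linarith [hnn ∅]
  calc f univ / 2 ≤ (∑ S : Finset α, f S) / 2 ^ Fintype.card α :=
        div_two_le_sum_div_two_pow_card hsplit
    _ = multilinearExt f (fun _ ↦ 1 / 2) := (multilinearExt_const_half f).symm
    _ ≤ multilinearExt f p :=
        multilinearExt_mono (fun S T h ↦ hmono S T h) (fun _ ↦ by norm_num) hp hp1
end

section
/- In the two-sided sequential matching model, assume every consumer is easy-to-match (p_i(j,{j}) ≥ 1/2 for all i ∈ N, j ∈ V) and every demand function Q_j : 2^N → [0,1] is monotone, submodular, and satisfies Q_j(∅) = 0. Let (A_1,…,A_m) be pairwise disjoint (possibly empty) subsets of N with union N such that Σ_{j∈V} r_j Q_j(A_j) ≥ (1 − 1/e)·max over all such tuples (B_1,…,B_m) of Σ_{j∈V} r_j Q_j(B_j). Then the singleton assortment family S defined by S_i = {j} for i ∈ A_j satisfies E[M_S] ≥ ((1 − 1/e)/2)·max over all assortment families S' = (S'_1,…,S'_n)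 with S'_i ⊆ V of E[M_{S'}]. -/
/-- Expected revenue of the matching when the assortment family is `S`:
`E[M_S] = ∑_j r_j · E[Q_j(A_j^S)]`, where consumer `i` independently selects supplier `j`
with probability `pc i j (S i)`. -/
def expRev {ι κ : Type*} [Fintype ι] [Fintype κ] [DecidableEq ι]
    (pc : ι → κ → Finset κ → ℝ) (Q : κ → Finset ι → ℝ) (r : κ → ℝ)
    (S : ι → Finset κ) : ℝ :=
  ∑ j : κ, r j * ∑ A : Finset ι,
    Q j A * ((∏ i ∈ A, pc i j (S i)) * ∏ i ∈ Aᶜ, (1 - pc i j (S i)))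

/-!
Let `W = ∑ⱼ rⱼ Qⱼ(Aⱼ)`. Under any assortment family the consumers' choices are independent, and
every realisation of them, with the unmatched consumers handed to an arbitrary supplier, is a
partition of `N` whose welfare dominates the realised revenue by monotonicity; averaging the
`(1 - 1/e)`-approximation inequality over the realisations gives `(1 - 1/e) E[M_{S'}] ≤ W`.
Under the singleton family, supplier `j` receives a random subset of `Aⱼ` containing each
consumer independently with probability at least `1/2`. Conditioning on one consumer at a time,
submodularity shows that such a random subset `X` of a set `T` satisfies
`E[Q(X ∪ B)] ≥ (Q(T ∪ B) + Q(B)) / 2` for every `B` disjoint from `T`; hence `E[M_S] ≥ W / 2`.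
-/

open Finset

section SubsetProb

variable {ι : Type*} [DecidableEq ι]

def subsetProb (p : ι → ℝ) (T X : Finset ι) : ℝ :=
  (∏ i ∈ X, p i) * ∏ i ∈ T \ X, (1 - p i)

lemma subsetProb_nonneg {p : ι → ℝ} {T X : Finset ι} (hp : ∀ i ∈ T, 0 ≤ p i ∧ p i ≤ 1)
    (hXT : X ⊆ T) : 0 ≤ subsetProb p T X :=
  mul_nonneg (prod_nonneg fun i hi => (hp i (hXT hi)).1)
    (prod_nonneg fun i hi => sub_nonneg.2 (hp i (mem_sdiff.1 hi).1).2)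

lemma sum_powerset_insert_mul_subsetProb {e : ι} {T : Finset ι} (he : e ∉ T) (p : ι → ℝ)
    (g : Finset ι → ℝ) :
    ∑ X ∈ (insert e T).powerset, g X * subsetProb p (insert e T) X =
      ∑ X ∈ T.powerset, ((1 - p e) * g X + p e * g (insert e X)) * subsetProb p T X := by
  rw [sum_powerset_insert he, ← sum_add_distrib]
  refine sum_congr rfl fun X hX => ?_
  have heX : e ∉ X := fun h => he (mem_powerset.1 hX h)
  rw [subsetProb, subsetProb, subsetProb, insert_sdiff_of_notMem _ heX, insert_sdiff_insert,
    sdiff_insert_of_notMem he, prod_insert heX, prod_insert fun h => he (mem_sdiff.1 h).1]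
  ring

lemma sum_mul_prod_eq_sum_powerset_mul_subsetProb [Fintype ι] {p : ι → ℝ} {T : Finset ι}
    (hp : ∀ i ∉ T, p i = 0) (g : Finset ι → ℝ) :
    ∑ A, g A * ((∏ i ∈ A, p i) * ∏ i ∈ Aᶜ, (1 - p i)) =
      ∑ X ∈ T.powerset, g X * subsetProb p T X := by
  refine (sum_subset_zero_on_sdiff (subset_univ _) (fun A hA => ?_) fun X hX => ?_).symm
  · obtain ⟨i, hiA, hiT⟩ := not_subset.1 (by simpa using hA)
    rw [prod_eq_zero hiA (hp i hiT), zero_mul, mul_zero]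
  · rw [subsetProb]
    congr 2
    refine prod_subset (fun i hi => ?_) fun i hi hi' => ?_
    · exact mem_compl.2 (mem_sdiff.1 hi).2
    · rw [hp i fun hiT => hi' (mem_sdiff.2 ⟨hiT, mem_compl.1 hi⟩), sub_zero]

variable {Q : Finset ι → ℝ}

theorem add_div_two_le_sum_powerset_mul_subsetProb (hmono : Monotone Q)
    (hsub : ∀ (A B : Finset ι) (e : ι), A ⊆ B → e ∉ B →
      Q (insert e B) - Q B ≤ Q (insert e A) - Q A)
    {p : ι → ℝ} {T : Finset ι}
    (hp : ∀ i ∈ T, 1 / 2 ≤ p i ∧ p i ≤ 1) {B : Finset ι} (hTB : Disjoint T B) :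
    (Q (T ∪ B) + Q B) / 2 ≤ ∑ X ∈ T.powerset, Q (X ∪ B) * subsetProb p T X := by
  induction T using Finset.induction_on generalizing B with
  | empty => simp [subsetProb]
  | @insert e T he ih =>
    obtain ⟨⟨hpe, -⟩, hpT⟩ := forall_mem_insert _ _ _ |>.1 hp
    obtain ⟨heB, hTB⟩ := disjoint_insert_left.1 hTB
    have hw (X) (hX : X ∈ T.powerset) : 0 ≤ subsetProb p T X :=
      subsetProb_nonneg (fun i hi => ⟨by linarith [hpT i hi], (hpT i hi).2⟩) (mem_powerset.1 hX)
    have hstep : ∀ X ∈ T.powerset, (Q (X ∪ B) + Q (X ∪ insert e B)) / 2 * subsetProb p T X ≤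
        ((1 - p e) * Q (X ∪ B) + p e * Q (insert e X ∪ B)) * subsetProb p T X := by
      intro X hX
      refine mul_le_mul_of_nonneg_right ?_ (hw X hX)
      have hmono_e : Q (X ∪ B) ≤ Q (X ∪ insert e B) :=
        hmono (union_subset_union_right (subset_insert e B))
      rw [insert_union, ← union_insert]
      nlinarith [mul_nonneg (sub_nonneg.2 hpe) (sub_nonneg.2 hmono_e)]
    have hdiminishing := hsub B (T ∪ B) e subset_union_right (by simp [he, heB])
    calc (Q (insert e T ∪ B) + Q B) / 2
        ≤ ((Q (T ∪ B) + Q B) + (Q (T ∪ insert e B) + Q (insert e B))) / 4 := by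
          rw [insert_union, union_insert]; linarith
      _ ≤ (∑ X ∈ T.powerset, Q (X ∪ B) * subsetProb p T X +
            ∑ X ∈ T.powerset, Q (X ∪ insert e B) * subsetProb p T X) / 2 := by
          linarith [ih hpT hTB, ih hpT (disjoint_insert_right.2 ⟨he, hTB⟩)]
      _ = ∑ X ∈ T.powerset, (Q (X ∪ B) + Q (X ∪ insert e B)) / 2 * subsetProb p T X := by
          rw [← sum_add_distrib, sum_div]
          exact sum_congr rfl fun X _ => by ring
      _ ≤ _ := (sum_le_sum hstep).trans_eq (sum_powerset_insert_mul_subsetProb he p _).symm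

theorem div_two_le_sum_mul_prod [Fintype ι] (hmono : Monotone Q)
    (hsub : ∀ (A B : Finset ι) (e : ι), A ⊆ B → e ∉ B →
      Q (insert e B) - Q B ≤ Q (insert e A) - Q A)
    (hQ0 : Q ∅ = 0) {p : ι → ℝ} {T : Finset ι}
    (hp : ∀ i ∈ T, 1 / 2 ≤ p i ∧ p i ≤ 1) (hp0 : ∀ i ∉ T, p i = 0) :
    Q T / 2 ≤ ∑ A, Q A * ((∏ i ∈ A, p i) * ∏ i ∈ Aᶜ, (1 - p i)) := by
  rw [sum_mul_prod_eq_sum_powerset_mul_subsetProb hp0]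
  simpa [hQ0] using
    add_div_two_le_sum_powerset_mul_subsetProb hmono hsub hp (disjoint_empty_right T)

end SubsetProb

section RandomChoice

variable {ι κ : Type*} [Fintype ι] [Fintype κ] {w : ι → κ → ℝ}

/-- The probability of the choice profile `f` when consumer `i` picks `some j` with probability
`w i j` and the outside option `none` otherwise, independently of the other consumers. -/
def choiceProb (w : ι → κ → ℝ) (f : ι → Option κ) : ℝ :=
  ∏ i, (f i).elim (1 - ∑ j, w i j) (w i)

lemma choiceProb_nonneg (hw0 : ∀ i j, 0 ≤ w i j) (hw1 : ∀ i, ∑ j, w i j ≤ 1)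
    (f : ι → Option κ) : 0 ≤ choiceProb w f :=
  prod_nonneg fun i _ => by cases f i <;> simp [hw0, hw1]

variable [DecidableEq ι]

lemma sum_choiceProb (w : ι → κ → ℝ) : ∑ f, choiceProb w f = 1 := by
  simp only [choiceProb]
  rw [← Fintype.prod_sum fun i (o : Option κ) => o.elim (1 - ∑ j, w i j) (w i)]
  simp [Fintype.sum_option]

variable [DecidableEq κ]

lemma sum_choiceProb_filter_eq (w : ι → κ → ℝ) (j : κ) (A : Finset ι) :
    ∑ f with ({i | f i = some j} : Finset ι) = A, choiceProb w f =
      (∏ i ∈ A, w i j) * ∏ i ∈ Aᶜ, (1 - w i j) := by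
  set t : ι → Finset (Option κ) := fun i => if i ∈ A then {some j} else univ.erase (some j)
  have hfiber : ({f | ({i | f i = some j} : Finset ι) = A} : Finset (ι → Option κ)) =
      Fintype.piFinset t := by
    ext f
    simp only [mem_filter, mem_univ, true_and, Fintype.mem_piFinset, Finset.ext_iff, t]
    refine forall_congr' fun i => ?_
    split_ifs with hi <;> simp [hi]
  have hmarginal (i : ι) :
      ∑ o ∈ t i, o.elim (1 - ∑ j, w i j) (w i) = if i ∈ A then w i j else 1 - w i j := by
    split_ifs with hi <;> simp [t, hi, sum_erase_eq_sub, Fintype.sum_option]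
  simp only [choiceProb]
  rw [hfiber, ← prod_univ_sum t fun i o => o.elim (1 - ∑ j, w i j) (w i),
    Fintype.prod_congr _ _ hmarginal, prod_ite]
  congr 2 <;> ext <;> simp

lemma sum_mul_prod_eq_sum_choiceProb_mul (w : ι → κ → ℝ) (j : κ) (g : Finset ι → ℝ) :
    ∑ A, g A * ((∏ i ∈ A, w i j) * ∏ i ∈ Aᶜ, (1 - w i j)) =
      ∑ f, choiceProb w f * g {i | f i = some j} := by
  rw [← sum_fiberwise univ (fun f : ι → Option κ => ({i | f i = some j} : Finset ι))]
  refine sum_congr rfl fun A _ => ?_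
  rw [← sum_choiceProb_filter_eq, mul_sum]
  exact sum_congr rfl fun f hf => by rw [(mem_filter.1 hf).2, mul_comm]

end RandomChoice

theorem mul_sum_le_of_forall_partition {ι κ : Type*} [Fintype ι] [DecidableEq ι] [Fintype κ]
    [DecidableEq κ] [Nonempty κ] {w : ι → κ → ℝ} (hw0 : ∀ i j, 0 ≤ w i j)
    (hw1 : ∀ i, ∑ j, w i j ≤ 1) {Q : κ → Finset ι → ℝ} (hQmono : ∀ j, Monotone (Q j))
    {r : κ → ℝ} (hr : ∀ j, 0 ≤ r j) {c W : ℝ} (hc : 0 ≤ c)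
    (hpart : ∀ B : κ → Finset ι, (∀ j j', j ≠ j' → Disjoint (B j) (B j')) →
      univ.biUnion B = univ → c * ∑ j, r j * Q j (B j) ≤ W) :
    c * ∑ j, r j * ∑ A, Q j A * ((∏ i ∈ A, w i j) * ∏ i ∈ Aᶜ, (1 - w i j)) ≤ W := by
  obtain ⟨j₀⟩ := ‹Nonempty κ›
  have hrealization (f : ι → Option κ) : c * ∑ j, r j * Q j {i | f i = some j} ≤ W := by
    refine le_trans ?_ (hpart (fun j => {i | (f i).getD j₀ = j})
      (fun j j' hne => Set.pairwiseDisjoint_filter _ Set.univ univ trivial trivial hne)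
      (biUnion_filter_eq_of_maps_to fun _ _ => mem_univ _))
    gcongr with j
    · exact hr j
    · exact hQmono j fun i hi => by simp [(mem_filter.1 hi).2]
  calc c * ∑ j, r j * ∑ A, Q j A * ((∏ i ∈ A, w i j) * ∏ i ∈ Aᶜ, (1 - w i j))
      = ∑ f, choiceProb w f * (c * ∑ j, r j * Q j {i | f i = some j}) := by
        simp_rw [sum_mul_prod_eq_sum_choiceProb_mul, mul_sum]
        rw [sum_comm]
        exact sum_congr rfl fun f _ => sum_congr rfl fun j _ => by ring
    _ ≤ ∑ f, choiceProb w f * W :=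
        sum_le_sum fun f _ =>
          mul_le_mul_of_nonneg_left (hrealization f) (choiceProb_nonneg hw0 hw1 f)
    _ = W := by rw [← sum_mul, sum_choiceProb, one_mul]

theorem singleton_assortment_approximation_general
    {ι κ : Type*} [Fintype ι] [Fintype κ] [DecidableEq ι]
    (pc : ι → κ → Finset κ → ℝ)
    (hpc0 : ∀ i j S, 0 ≤ pc i j S)
    (hpcoff : ∀ (i : ι) (j : κ) (S : Finset κ), j ∉ S → pc i j S = 0)
    (hpcsum : ∀ (i : ι) (S : Finset κ), ∑ j ∈ S, pc i j S ≤ 1)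
    (heasy : ∀ i j, 1 / 2 ≤ pc i j {j})
    (Q : κ → Finset ι → ℝ)
    (hQ0 : ∀ j, Q j ∅ = 0)
    (hQmono : ∀ j (A B : Finset ι), A ⊆ B → Q j A ≤ Q j B)
    (hQsub : ∀ j (A B : Finset ι) (e : ι), A ⊆ B → e ∉ B →
      Q j (insert e B) - Q j B ≤ Q j (insert e A) - Q j A)
    (r : κ → ℝ) (hr : ∀ j, 0 ≤ r j)
    (A : κ → Finset ι)
    (hcover : Finset.univ.biUnion A = Finset.univ)
    (happrox : ∀ B : κ → Finset ι,
      (∀ j j', j ≠ j' → Disjoint (B j) (B j')) →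
      Finset.univ.biUnion B = Finset.univ →
      (1 - (Real.exp 1)⁻¹) * ∑ j : κ, r j * Q j (B j) ≤ ∑ j : κ, r j * Q j (A j))
    (S : ι → Finset κ) (hS : ∀ j, ∀ i ∈ A j, S i = {j}) :
    ∀ S' : ι → Finset κ,
      ((1 - (Real.exp 1)⁻¹) / 2) * expRev pc Q r S' ≤ expRev pc Q r S := by
  classical
  intro S'
  rcases isEmpty_or_nonempty κ with hκ | hκ
  · simp [expRev]
  have hc : 0 ≤ 1 - (Real.exp 1)⁻¹ :=
    sub_nonneg.2 (inv_le_one_of_one_le₀ (Real.one_le_exp zero_le_one))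
  have hupper : (1 - (Real.exp 1)⁻¹) * expRev pc Q r S' ≤ ∑ j, r j * Q j (A j) := by
    refine mul_sum_le_of_forall_partition (fun i j => hpc0 i j _) (fun i => ?_)
      (fun j _ _ => hQmono j _ _) hr hc happrox
    rw [← sum_subset (subset_univ (S' i)) fun j _ hj => hpcoff i j _ hj]
    exact hpcsum i (S' i)
  have hlower (j : κ) : Q j (A j) / 2 ≤
      ∑ X, Q j X * ((∏ i ∈ X, pc i j (S i)) * ∏ i ∈ Xᶜ, (1 - pc i j (S i))) := by
    refine div_two_le_sum_mul_prod (fun _ _ => hQmono j _ _) (hQsub j) (hQ0 j)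
      (fun i hi => ?_) fun i hi => ?_
    · rw [hS j i hi]
      exact ⟨heasy i j, by simpa using hpcsum i {j}⟩
    · obtain ⟨j', -, hij'⟩ := mem_biUnion.1 (hcover ▸ mem_univ i)
      rw [hS j' i hij']
      exact hpcoff i j _ fun hj => hi (mem_singleton.1 hj ▸ hij')
  calc (1 - (Real.exp 1)⁻¹) / 2 * expRev pc Q r S' ≤ ∑ j, r j * (Q j (A j) / 2) := by
        simp only [← mul_div_assoc, ← sum_div]
        linarith
    _ ≤ expRev pc Q r S := sum_le_sum fun j _ => mul_le_mul_of_nonneg_left (hlower j) (hr j)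

/-- With easy-to-match consumers and monotone submodular demand
functions, if the partition `(A_1,…,A_m)` is a `(1 − 1/e)`-approximate solution of the
submodular welfare problem, then the induced singleton assortment family is a
`(1 − 1/e)/2`-approximation for the assortment optimization problem. -/
theorem singleton_assortment_approximation
    {ι κ : Type*} [Fintype ι] [Fintype κ] [DecidableEq ι] [DecidableEq κ]
    (pc : ι → κ → Finset κ → ℝ)
    (hpc0 : ∀ i j S, 0 ≤ pc i j S)
    (hpcoff : ∀ (i : ι) (j : κ) (S : Finset κ), j ∉ S → pc i j S = 0)
    (hpcsum : ∀ (i : ι) (S : Finset κ), ∑ j ∈ S, pc i j S ≤ 1)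
    (heasy : ∀ i j, 1 / 2 ≤ pc i j {j})
    (Q : κ → Finset ι → ℝ)
    (hQrange : ∀ j A, Q j A ∈ Set.Icc (0 : ℝ) 1)
    (hQ0 : ∀ j, Q j ∅ = 0)
    (hQmono : ∀ j (A B : Finset ι), A ⊆ B → Q j A ≤ Q j B)
    (hQsub : ∀ j (A B : Finset ι) (e : ι), A ⊆ B → e ∉ B →
      Q j (insert e B) - Q j B ≤ Q j (insert e A) - Q j A)
    (r : κ → ℝ) (hr : ∀ j, 0 ≤ r j)
    (A : κ → Finset ι)
    (hdisj : ∀ j j', j ≠ j' → Disjoint (A j) (A j'))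
    (hcover : Finset.univ.biUnion A = Finset.univ)
    (happrox : ∀ B : κ → Finset ι,
      (∀ j j', j ≠ j' → Disjoint (B j) (B j')) →
      Finset.univ.biUnion B = Finset.univ →
      (1 - (Real.exp 1)⁻¹) * ∑ j : κ, r j * Q j (B j) ≤ ∑ j : κ, r j * Q j (A j))
    (S : ι → Finset κ) (hS : ∀ j, ∀ i ∈ A j, S i = {j}) :
    ∀ S' : ι → Finset κ,
      ((1 - (Real.exp 1)⁻¹) / 2) * expRev pc Q r S' ≤ expRev pc Q r S :=
  singleton_assortment_approximation_general pc hpc0 hpcoff hpcsum heasy Q hQ0 hQmono hQsub r hr A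
    hcover happrox S hS
end

section
/- In the two-sided sequential matching model, assume consumers follow MNL models with scores v_ij > 0 and each demand function Q_j : 2^N → [0,1] is monotone with Q_j(∅) = 0. For any x̂ ∈ {0,1}^{N×V} with induced assortment family S_i = {j ∈ V : x̂_ij = 1}, the point defined by ŵ_i = 1/(1 + Σ_{ℓ∈V} v_iℓ x̂_iℓ), ŷ_ij = x̂_ij·ŵ_i, and ẑ_j = min{1, Σ_{i∈N} v_ij ŷ_ij} is feasible for the LP relaxation (9), and its objective value equals Σ_{j∈V} r_j·min{1, η_j(S)} where η_j(S) = Σ_{i∈N} v_ij x̂_ij/(1 + Σ_{ℓ∈V} v_iℓ x̂_iℓ). Consequently, OPT = max over assortment families S of E[M_S] satisfies OPT ≤ OPT_LP. -/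
/-- Multinomial logit choice probabilities with scores `v`:
`p_i(j, S) = v_{ij} / (1 + ∑_{ℓ∈S} v_{iℓ})` for `j ∈ S` and `0` otherwise. -/
noncomputable def pcMNL {ι κ : Type*} [DecidableEq κ] (v : ι → κ → ℝ) (i : ι) (j : κ)
    (S : Finset κ) : ℝ :=
  if j ∈ S then v i j / (1 + ∑ ℓ ∈ S, v i ℓ) else 0

/-!
Write `P A = ∏_{i∈A} p_i ∏_{i∉A} (1 - p_i)` for the probability that exactly the consumers in `A`
pick a given supplier. Since `Q(∅) = 0` and `Q ≤ 1`, the expected demand is at most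
`∑_{A ≠ ∅} P A = 1 - ∏_i (1 - p_i)`, which is at most `1` and, by the union bound, at most
`∑_i p_i`. For MNL consumers `∑_i p_i` is exactly the supply `∑_i v_ij ŷ_ij` of the
Charnes–Cooper point induced by the assortment family, and that point is feasible for LP (9).
-/

open Finset

lemma one_sub_prod_one_sub_le_sum {ι : Type*} (s : Finset ι) {p : ι → ℝ}
    (hp : ∀ i ∈ s, 0 ≤ p i ∧ p i ≤ 1) :
    1 - ∏ i ∈ s, (1 - p i) ≤ ∑ i ∈ s, p i := by
  classical
  induction s using Finset.induction_on with
  | empty => simp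
  | insert a s has ih =>
    have hs : ∀ i ∈ s, 0 ≤ p i ∧ p i ≤ 1 := fun i hi => hp i (mem_insert_of_mem hi)
    have ha := hp a (mem_insert_self a s)
    have hprod_le : ∏ i ∈ s, (1 - p i) ≤ 1 :=
      prod_le_one (fun i hi => by linarith [(hs i hi).2]) (fun i hi => by linarith [(hs i hi).1])
    rw [prod_insert has, sum_insert has]
    nlinarith [ih hs]

section BernoulliWeight

variable {ι : Type*} [Fintype ι] [DecidableEq ι]

def bernoulliWeight (p : ι → ℝ) (A : Finset ι) : ℝ :=
  (∏ i ∈ A, p i) * ∏ i ∈ Aᶜ, (1 - p i)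

variable {p : ι → ℝ}

lemma bernoulliWeight_nonneg (hp : ∀ i, 0 ≤ p i ∧ p i ≤ 1) (A : Finset ι) :
    0 ≤ bernoulliWeight p A :=
  mul_nonneg (prod_nonneg fun i _ => (hp i).1) (prod_nonneg fun i _ => sub_nonneg.2 (hp i).2)

lemma sum_bernoulliWeight (p : ι → ℝ) : ∑ A, bernoulliWeight p A = 1 := by
  simpa [bernoulliWeight] using (Fintype.prod_add p (fun i => 1 - p i)).symm

lemma bernoulliWeight_empty (p : ι → ℝ) : bernoulliWeight p ∅ = ∏ i, (1 - p i) := by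
  simp [bernoulliWeight]

lemma sum_mul_bernoulliWeight_le (hp : ∀ i, 0 ≤ p i ∧ p i ≤ 1) {q : Finset ι → ℝ}
    (hq : ∀ A, q A ≤ 1) (hq0 : q ∅ = 0) :
    ∑ A, q A * bernoulliWeight p A ≤ 1 - ∏ i, (1 - p i) := by
  have hsplit (f : Finset ι → ℝ) : f ∅ + ∑ A ∈ univ.erase ∅, f A = ∑ A, f A :=
    add_sum_erase univ f (mem_univ ∅)
  calc ∑ A, q A * bernoulliWeight p A
      = ∑ A ∈ univ.erase ∅, q A * bernoulliWeight p A := by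
        rw [← hsplit, hq0, zero_mul, zero_add]
    _ ≤ ∑ A ∈ univ.erase ∅, bernoulliWeight p A :=
        sum_le_sum fun A _ => mul_le_of_le_one_left (bernoulliWeight_nonneg hp A) (hq A)
    _ = 1 - ∏ i, (1 - p i) := by
        rw [← bernoulliWeight_empty]
        exact eq_sub_of_add_eq' ((hsplit _).trans (sum_bernoulliWeight p))

lemma sum_mul_bernoulliWeight_le_min (hp : ∀ i, 0 ≤ p i ∧ p i ≤ 1) {q : Finset ι → ℝ}
    (hq : ∀ A, q A ≤ 1) (hq0 : q ∅ = 0) :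
    ∑ A, q A * bernoulliWeight p A ≤ min 1 (∑ i, p i) :=
  (sum_mul_bernoulliWeight_le hp hq hq0).trans <| le_min
    (sub_le_self _ (prod_nonneg fun i _ => sub_nonneg.2 (hp i).2))
    (one_sub_prod_one_sub_le_sum univ fun i _ => hp i)

lemma expRev_le_sum_mul_min {κ : Type*} [Fintype κ] (pc : ι → κ → Finset κ → ℝ)
    (Q : κ → Finset ι → ℝ) (r : κ → ℝ) (S : ι → Finset κ)
    (hpc : ∀ i j, 0 ≤ pc i j (S i) ∧ pc i j (S i) ≤ 1)
    (hQ1 : ∀ j A, Q j A ≤ 1) (hQ0 : ∀ j, Q j ∅ = 0) (hr : ∀ j, 0 ≤ r j) :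
    expRev pc Q r S ≤ ∑ j, r j * min 1 (∑ i, pc i j (S i)) :=
  sum_le_sum fun j _ => mul_le_mul_of_nonneg_left
    (sum_mul_bernoulliWeight_le_min (fun i => hpc i j) (hQ1 j) (hQ0 j)) (hr j)

end BernoulliWeight

section InducedPoint

variable {ι κ : Type*} {v : ι → κ → ℝ}

lemma one_add_sum_pos (hv : ∀ i j, 0 ≤ v i j) (i : ι) (T : Finset κ) :
    0 < 1 + ∑ ℓ ∈ T, v i ℓ :=
  add_pos_of_pos_of_nonneg one_pos (sum_nonneg fun ℓ _ => hv i ℓ)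

variable [DecidableEq κ]

lemma pcMNL_nonneg (hv : ∀ i j, 0 ≤ v i j) (i : ι) (j : κ) (T : Finset κ) :
    0 ≤ pcMNL v i j T := by
  unfold pcMNL
  split_ifs
  · exact div_nonneg (hv i j) (one_add_sum_pos hv i T).le
  · exact le_rfl

lemma pcMNL_le_one (hv : ∀ i j, 0 ≤ v i j) (i : ι) (j : κ) (T : Finset κ) :
    pcMNL v i j T ≤ 1 := by
  unfold pcMNL
  split_ifs with hj
  · rw [div_le_one (one_add_sum_pos hv i T)]
    linarith [single_le_sum (fun ℓ _ => hv i ℓ) hj]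
  · exact zero_le_one

/-- The Charnes–Cooper point `(ŷ, ŵ, ẑ)` induced by `x̂_ij = [j ∈ S i]`. -/
noncomputable def inducedW (v : ι → κ → ℝ) (S : ι → Finset κ) (i : ι) : ℝ :=
  1 / (1 + ∑ ℓ ∈ S i, v i ℓ)

noncomputable def inducedY (v : ι → κ → ℝ) (S : ι → Finset κ) (i : ι) (j : κ) : ℝ :=
  (if j ∈ S i then 1 else 0) * inducedW v S i

noncomputable def inducedZ [Fintype ι] (v : ι → κ → ℝ) (S : ι → Finset κ) (j : κ) : ℝ :=
  min 1 (∑ i, v i j * inducedY v S i j)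

def IsLPFeasible [Fintype ι] [Fintype κ] (v : ι → κ → ℝ) (y : ι → κ → ℝ) (w : ι → ℝ)
    (z : κ → ℝ) : Prop :=
  (∀ j, z j ≤ 1) ∧ (∀ j, z j ≤ ∑ i, v i j * y i j) ∧
    (∀ i, w i + ∑ j, v i j * y i j = 1) ∧ ∀ i j, 0 ≤ y i j ∧ y i j ≤ w i

lemma mul_inducedY (S : ι → Finset κ) (i : ι) (j : κ) :
    v i j * inducedY v S i j = pcMNL v i j (S i) := by
  unfold inducedY inducedW pcMNL
  split_ifs <;> ring

lemma inducedW_add_sum_mul_inducedY [Fintype κ] (hv : ∀ i j, 0 ≤ v i j)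
    (S : ι → Finset κ) (i : ι) :
    inducedW v S i + ∑ j, v i j * inducedY v S i j = 1 := by
  have hden := (one_add_sum_pos hv i (S i)).ne'
  simp only [inducedY, mul_ite, mul_zero, ite_mul, zero_mul]
  rw [sum_ite_mem, univ_inter, ← sum_mul, inducedW]
  field_simp

lemma isLPFeasible_induced [Fintype ι] [Fintype κ] (hv : ∀ i j, 0 ≤ v i j)
    (S : ι → Finset κ) : IsLPFeasible v (inducedY v S) (inducedW v S) (inducedZ v S) := by
  refine ⟨fun j => min_le_left _ _, fun j => min_le_right _ _,
    inducedW_add_sum_mul_inducedY hv S, fun i j => ?_⟩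
  have hw : 0 ≤ inducedW v S i := one_div_nonneg.2 (one_add_sum_pos hv i (S i)).le
  unfold inducedY
  split_ifs <;> simp [hw]

lemma inducedZ_eq_min_sum_pcMNL [Fintype ι] (S : ι → Finset κ) (j : κ) :
    inducedZ v S j = min 1 (∑ i, pcMNL v i j (S i)) := by
  simp only [inducedZ, mul_inducedY]

end InducedPoint

theorem lp_relaxation_feasible_and_upper_bound_general
    {ι κ : Type*} [Fintype ι] [Fintype κ] [DecidableEq ι] [DecidableEq κ]
    (v : ι → κ → ℝ) (hv : ∀ i j, 0 < v i j)
    (Q : κ → Finset ι → ℝ)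
    (hQrange : ∀ j A, Q j A ∈ Set.Icc (0 : ℝ) 1)
    (hQ0 : ∀ j, Q j ∅ = 0)
    (r : κ → ℝ) (hr : ∀ j, 0 ≤ r j)
    (S : ι → Finset κ) :
    -- feasibility of the induced point `(ŷ, ŵ, ẑ)` for LP (9)
    (∀ j : κ, min 1 (∑ i : ι, v i j *
        ((if j ∈ S i then (1 : ℝ) else 0) * (1 / (1 + ∑ ℓ ∈ S i, v i ℓ)))) ≤ 1) ∧
    (∀ j : κ, min 1 (∑ i : ι, v i j *
        ((if j ∈ S i then (1 : ℝ) else 0) * (1 / (1 + ∑ ℓ ∈ S i, v i ℓ)))) ≤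
      ∑ i : ι, v i j *
        ((if j ∈ S i then (1 : ℝ) else 0) * (1 / (1 + ∑ ℓ ∈ S i, v i ℓ)))) ∧
    (∀ i : ι, (1 / (1 + ∑ ℓ ∈ S i, v i ℓ)) + ∑ j : κ, v i j *
        ((if j ∈ S i then (1 : ℝ) else 0) * (1 / (1 + ∑ ℓ ∈ S i, v i ℓ))) = 1) ∧
    (∀ (i : ι) (j : κ),
      0 ≤ (if j ∈ S i then (1 : ℝ) else 0) * (1 / (1 + ∑ ℓ ∈ S i, v i ℓ)) ∧
      (if j ∈ S i then (1 : ℝ) else 0) * (1 / (1 + ∑ ℓ ∈ S i, v i ℓ)) ≤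
        1 / (1 + ∑ ℓ ∈ S i, v i ℓ)) ∧
    -- the LP objective of the induced point equals `∑_j r_j min{1, η_j(S)}`
    (∑ j : κ, r j * min 1 (∑ i : ι, v i j *
        ((if j ∈ S i then (1 : ℝ) else 0) * (1 / (1 + ∑ ℓ ∈ S i, v i ℓ)))) =
      ∑ j : κ, r j * min 1
        (∑ i : ι, if j ∈ S i then v i j / (1 + ∑ ℓ ∈ S i, v i ℓ) else 0)) ∧
    -- consequently, `OPT ≤ OPT_LP`
    (∀ S' : ι → Finset κ, ∃ (y : ι → κ → ℝ) (w : ι → ℝ) (z : κ → ℝ),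
      (∀ j, z j ≤ 1) ∧
      (∀ j, z j ≤ ∑ i : ι, v i j * y i j) ∧
      (∀ i, w i + ∑ j : κ, v i j * y i j = 1) ∧
      (∀ i j, 0 ≤ y i j ∧ y i j ≤ w i) ∧
      expRev (pcMNL v) Q r S' ≤ ∑ j : κ, r j * z j) := by
  have hv' : ∀ i j, 0 ≤ v i j := fun i j => (hv i j).le
  obtain ⟨hz_le_one, hz_le_supply, hw_add, hy_bounds⟩ := isLPFeasible_induced hv' S
  refine ⟨hz_le_one, hz_le_supply, hw_add, hy_bounds,
    sum_congr rfl fun j _ => congrArg (r j * ·) (inducedZ_eq_min_sum_pcMNL S j), fun S' => ?_⟩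
  obtain ⟨hz_le_one', hz_le_supply', hw_add', hy_bounds'⟩ := isLPFeasible_induced hv' S'
  refine ⟨inducedY v S', inducedW v S', inducedZ v S',
    hz_le_one', hz_le_supply', hw_add', hy_bounds', ?_⟩
  calc expRev (pcMNL v) Q r S'
      ≤ ∑ j, r j * min 1 (∑ i, pcMNL v i j (S' i)) :=
        expRev_le_sum_mul_min _ Q r S' (fun i j => ⟨pcMNL_nonneg hv' i j _, pcMNL_le_one hv' i j _⟩)
          (fun j A => (hQrange j A).2) hQ0 hr
    _ = ∑ j, r j * inducedZ v S' j := by simp only [inducedZ_eq_min_sum_pcMNL]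

/-- **Lemma 3.3.** For MNL consumers, every assortment family `x̂` induces
a feasible point of the LP relaxation (9) via the Charnes–Cooper transformation, whose
objective equals `∑_j r_j min{1, η_j(S)}`; consequently `OPT ≤ OPT_LP`. -/
theorem lp_relaxation_feasible_and_upper_bound
    {ι κ : Type*} [Fintype ι] [Fintype κ] [DecidableEq ι] [DecidableEq κ]
    (v : ι → κ → ℝ) (hv : ∀ i j, 0 < v i j)
    (Q : κ → Finset ι → ℝ)
    (hQrange : ∀ j A, Q j A ∈ Set.Icc (0 : ℝ) 1)
    (hQ0 : ∀ j, Q j ∅ = 0)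
    (hQmono : ∀ j (A B : Finset ι), A ⊆ B → Q j A ≤ Q j B)
    (r : κ → ℝ) (hr : ∀ j, 0 ≤ r j)
    (S : ι → Finset κ) :
    -- feasibility of the induced point `(ŷ, ŵ, ẑ)` for LP (9)
    (∀ j : κ, min 1 (∑ i : ι, v i j *
        ((if j ∈ S i then (1 : ℝ) else 0) * (1 / (1 + ∑ ℓ ∈ S i, v i ℓ)))) ≤ 1) ∧
    (∀ j : κ, min 1 (∑ i : ι, v i j *
        ((if j ∈ S i then (1 : ℝ) else 0) * (1 / (1 + ∑ ℓ ∈ S i, v i ℓ)))) ≤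
      ∑ i : ι, v i j *
        ((if j ∈ S i then (1 : ℝ) else 0) * (1 / (1 + ∑ ℓ ∈ S i, v i ℓ)))) ∧
    (∀ i : ι, (1 / (1 + ∑ ℓ ∈ S i, v i ℓ)) + ∑ j : κ, v i j *
        ((if j ∈ S i then (1 : ℝ) else 0) * (1 / (1 + ∑ ℓ ∈ S i, v i ℓ))) = 1) ∧
    (∀ (i : ι) (j : κ),
      0 ≤ (if j ∈ S i then (1 : ℝ) else 0) * (1 / (1 + ∑ ℓ ∈ S i, v i ℓ)) ∧
      (if j ∈ S i then (1 : ℝ) else 0) * (1 / (1 + ∑ ℓ ∈ S i, v i ℓ)) ≤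
        1 / (1 + ∑ ℓ ∈ S i, v i ℓ)) ∧
    -- the LP objective of the induced point equals `∑_j r_j min{1, η_j(S)}`
    (∑ j : κ, r j * min 1 (∑ i : ι, v i j *
        ((if j ∈ S i then (1 : ℝ) else 0) * (1 / (1 + ∑ ℓ ∈ S i, v i ℓ)))) =
      ∑ j : κ, r j * min 1
        (∑ i : ι, if j ∈ S i then v i j / (1 + ∑ ℓ ∈ S i, v i ℓ) else 0)) ∧
    -- consequently, `OPT ≤ OPT_LP`
    (∀ S' : ι → Finset κ, ∃ (y : ι → κ → ℝ) (w : ι → ℝ) (z : κ → ℝ),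
      (∀ j, z j ≤ 1) ∧
      (∀ j, z j ≤ ∑ i : ι, v i j * y i j) ∧
      (∀ i, w i + ∑ j : κ, v i j * y i j = 1) ∧
      (∀ i j, 0 ≤ y i j ∧ y i j ≤ w i) ∧
      expRev (pcMNL v) Q r S' ≤ ∑ j : κ, r j * z j) :=
  lp_relaxation_feasible_and_upper_bound_general v hv Q hQrange hQ0 r hr S
end

section
/- Let V be a finite set, and suppose v_ℓ ∈ (0,1) and y_ℓ ≥ 0 for each ℓ ∈ V and w > 0 satisfy w + Σ_{ℓ∈V} v_ℓ y_ℓ = 1 and y_ℓ ≤ w for all ℓ ∈ V. Let (X_ℓ)_{ℓ∈V} be mutually independent Bernoulli random variables with P(X_ℓ = 1) = y_ℓ/w. Then for every j ∈ V: E[X_j/(1 + Σ_{ℓ∈V} v_ℓ X_ℓ)] ≥ y_j/(1 + v_j(w − y_j)) ≥ y_j/2. -/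
/-!
Write `p ℓ = y ℓ / w`. Conditioning on `X_j = 1`, the expectation equals
`p_j · E[1 / (1 + v_j + ∑_{ℓ ≠ j} v_ℓ X_ℓ)]`, and by Jensen's inequality for `x ↦ 1/x` (here in
the Cauchy–Schwarz form `(∑ q)² ≤ (∑ q/a)(∑ q a)`) this is at least `p_j / M` with
`M = 1 + v_j + ∑_{ℓ ≠ j} v_ℓ p_ℓ`. The constraint `w + ∑ v_ℓ y_ℓ = 1` turns `w M` into
`1 + v_j (w - y_j)`, and `v_j < 1`, `w ≤ 1` bound this by `2`.
-/

open Finset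

section Weighted

variable {ι : Type*}

theorem sq_sum_div_le_sum_div (s : Finset ι) {q a : ι → ℝ} (hq : ∀ i ∈ s, 0 ≤ q i)
    (ha : ∀ i ∈ s, 0 < a i) :
    (∑ i ∈ s, q i) ^ 2 / ∑ i ∈ s, q i * a i ≤ ∑ i ∈ s, q i / a i := by
  have hsum_div : 0 ≤ ∑ i ∈ s, q i / a i :=
    sum_nonneg fun i hi => div_nonneg (hq i hi) (ha i hi).le
  rcases (sum_nonneg fun i hi => mul_nonneg (hq i hi) (ha i hi).le).eq_or_lt' with h | h
  · simpa [h] using hsum_div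
  rw [div_le_iff₀ h]
  refine sum_sq_le_sum_mul_sum_of_sq_le_mul s (fun i hi => div_nonneg (hq i hi) (ha i hi).le)
    (fun i hi => mul_nonneg (hq i hi) (ha i hi).le) fun i hi => le_of_eq ?_
  field_simp [(ha i hi).ne']

end Weighted

section ProductBernoulli

variable {κ : Type*} [Fintype κ] [DecidableEq κ]

/-- The probability that independent Bernoulli variables with `P(X_ℓ = 1) = p ℓ` take the value `1`
exactly on `T`. -/
def bernoulliProductWeight (p : κ → ℝ) (T : Finset κ) : ℝ :=
  (∏ ℓ ∈ T, p ℓ) * ∏ ℓ ∈ Tᶜ, (1 - p ℓ)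

theorem bernoulliProductWeight_nonneg {p : κ → ℝ} (hp : ∀ ℓ, 0 ≤ p ℓ ∧ p ℓ ≤ 1)
    (T : Finset κ) : 0 ≤ bernoulliProductWeight p T :=
  mul_nonneg (prod_nonneg fun ℓ _ => (hp ℓ).1) (prod_nonneg fun ℓ _ => sub_nonneg.2 (hp ℓ).2)

theorem sum_bernoulliProductWeight_superset (p : κ → ℝ) (u : Finset κ) :
    ∑ T with u ⊆ T, bernoulliProductWeight p T = ∏ ℓ ∈ u, p ℓ := by
  -- expand `∏ ℓ, (p ℓ + g ℓ)` where `g` kills every `ℓ ∈ u` left out of `T`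
  have key := Fintype.prod_add p fun ℓ => if ℓ ∈ u then 0 else 1 - p ℓ
  have hleft : ∏ ℓ, (p ℓ + if ℓ ∈ u then 0 else 1 - p ℓ) = ∏ ℓ ∈ u, p ℓ := by
    rw [← Fintype.prod_ite_mem u p]
    exact Fintype.prod_congr _ _ fun ℓ => by split_ifs <;> ring
  have hright (T : Finset κ) : ∏ ℓ ∈ Tᶜ, (if ℓ ∈ u then 0 else 1 - p ℓ) =
      if u ⊆ T then ∏ ℓ ∈ Tᶜ, (1 - p ℓ) else 0 := by
    split_ifs with huT
    · exact prod_congr rfl fun ℓ hℓ => if_neg fun hu => mem_compl.1 hℓ (huT hu)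
    · obtain ⟨ℓ, hu, hT⟩ := not_subset.1 huT
      exact prod_eq_zero (mem_compl.2 hT) (if_pos hu)
  rw [hleft] at key
  rw [key, sum_filter]
  refine sum_congr rfl fun T _ => ?_
  rw [hright, bernoulliProductWeight, mul_ite, mul_zero]

theorem sum_bernoulliProductWeight_mem (p : κ → ℝ) (j : κ) :
    ∑ T with j ∈ T, bernoulliProductWeight p T = p j := by
  simpa using sum_bernoulliProductWeight_superset p {j}

theorem sum_bernoulliProductWeight_mem_mul_sum (p v : κ → ℝ) (j : κ) :
    ∑ T with j ∈ T, bernoulliProductWeight p T * ∑ ℓ ∈ T, v ℓ =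
      p j * (v j * (1 - p j) + ∑ ℓ, v ℓ * p ℓ) := by
  have hpair (ℓ : κ) : ∑ T with j ∈ T, bernoulliProductWeight p T * (if ℓ ∈ T then v ℓ else 0) =
      p j * (v ℓ * p ℓ + if ℓ = j then v j * (1 - p j) else 0) := by
    have hfilter : (univ.filter (j ∈ ·)).filter (ℓ ∈ ·) =
        univ.filter fun T : Finset κ => {j, ℓ} ⊆ T := by
      ext T
      simp [insert_subset_iff]
    have hprod : ∏ i ∈ {j, ℓ}, p i = p j * p ℓ + if ℓ = j then p j * (1 - p j) else 0 := by
      by_cases h : ℓ = j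
      · subst h; simp; ring
      · simp [prod_pair (Ne.symm h), h]
    simp only [mul_ite, mul_zero]
    rw [← sum_filter, hfilter, ← sum_mul, sum_bernoulliProductWeight_superset, hprod]
    split_ifs with h
    · subst h; ring
    · ring
  calc ∑ T with j ∈ T, bernoulliProductWeight p T * ∑ ℓ ∈ T, v ℓ
      = ∑ ℓ, ∑ T with j ∈ T, bernoulliProductWeight p T * (if ℓ ∈ T then v ℓ else 0) := by
        rw [sum_comm]
        refine sum_congr rfl fun T _ => ?_
        rw [← mul_sum, sum_ite_mem, univ_inter]
    _ = p j * (v j * (1 - p j) + ∑ ℓ, v ℓ * p ℓ) := by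
        rw [sum_congr rfl fun ℓ _ => hpair ℓ, ← mul_sum, sum_add_distrib, sum_ite_eq',
          if_pos (mem_univ j), add_comm]

theorem div_le_sum_bernoulliProductWeight_mul_div {p v : κ → ℝ}
    (hp : ∀ ℓ, 0 ≤ p ℓ ∧ p ℓ ≤ 1) (hv : ∀ ℓ, 0 ≤ v ℓ) (j : κ) :
    p j / (1 + v j * (1 - p j) + ∑ ℓ, v ℓ * p ℓ) ≤
      ∑ T, bernoulliProductWeight p T * ((if j ∈ T then 1 else 0) / (1 + ∑ ℓ ∈ T, v ℓ)) := by
  set M := 1 + v j * (1 - p j) + ∑ ℓ, v ℓ * p ℓ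
  have hpos (T : Finset κ) : 0 < 1 + ∑ ℓ ∈ T, v ℓ :=
    add_pos_of_pos_of_nonneg one_pos (sum_nonneg fun ℓ _ => hv ℓ)
  have hmass : ∑ T with j ∈ T, bernoulliProductWeight p T = p j :=
    sum_bernoulliProductWeight_mem p j
  have hmean : ∑ T with j ∈ T, bernoulliProductWeight p T * (1 + ∑ ℓ ∈ T, v ℓ) = p j * M := by
    simp only [mul_add, mul_one, sum_add_distrib, hmass, sum_bernoulliProductWeight_mem_mul_sum]
    ring
  have hcancel : p j ^ 2 / (p j * M) = p j / M := by
    rcases eq_or_ne (p j) 0 with h | h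
    · simp [h]
    · rw [sq, mul_div_mul_left _ _ h]
  calc p j / M
      = (∑ T with j ∈ T, bernoulliProductWeight p T) ^ 2 /
          ∑ T with j ∈ T, bernoulliProductWeight p T * (1 + ∑ ℓ ∈ T, v ℓ) := by
        rw [hmean, hmass, hcancel]
    _ ≤ ∑ T with j ∈ T, bernoulliProductWeight p T / (1 + ∑ ℓ ∈ T, v ℓ) :=
        sq_sum_div_le_sum_div _ (fun T _ => bernoulliProductWeight_nonneg hp T) fun T _ => hpos T
    _ = _ := by
        rw [sum_filter]
        refine sum_congr rfl fun T _ => ?_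
        split_ifs <;> ring

end ProductBernoulli

/-- **Proposition 3.5, independent rounding.** For independent Bernoulli
variables `X_ℓ` with success probabilities `y_ℓ / w` (expectation written as an explicit
sum over the possible realization sets `T`),
`E[X_j / (1 + ∑ v_ℓ X_ℓ)] ≥ y_j / (1 + v_j (w − y_j)) ≥ y_j / 2`. -/
theorem independent_rounding_expectation_bound
    {κ : Type*} [Fintype κ] [DecidableEq κ]
    (v y : κ → ℝ) (w : ℝ)
    (hv : ∀ ℓ, 0 < v ℓ ∧ v ℓ < 1) (hy : ∀ ℓ, 0 ≤ y ℓ) (hw : 0 < w)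
    (hsum : w + ∑ ℓ : κ, v ℓ * y ℓ = 1) (hyw : ∀ ℓ, y ℓ ≤ w) (j : κ) :
    y j / (1 + v j * (w - y j)) ≤
      ∑ T : Finset κ, ((∏ ℓ ∈ T, y ℓ / w) * ∏ ℓ ∈ Tᶜ, (1 - y ℓ / w)) *
        ((if j ∈ T then (1 : ℝ) else 0) / (1 + ∑ ℓ ∈ T, v ℓ)) ∧
    y j / 2 ≤ y j / (1 + v j * (w - y j)) := by
  have hp (ℓ : κ) : 0 ≤ y ℓ / w ∧ y ℓ / w ≤ 1 :=
    ⟨div_nonneg (hy ℓ) hw.le, (div_le_one hw).2 (hyw ℓ)⟩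
  have hw_le_one : w ≤ 1 := by
    linarith [sum_nonneg fun ℓ (_ : ℓ ∈ univ) => mul_nonneg (hv ℓ).1.le (hy ℓ)]
  have hscale : 1 + v j * (w - y j) = w * (1 + v j * (1 - y j / w) + ∑ ℓ, v ℓ * (y ℓ / w)) := by
    have hsum_scaled : w * ∑ ℓ, v ℓ * (y ℓ / w) = ∑ ℓ, v ℓ * y ℓ := by
      rw [mul_sum]
      exact sum_congr rfl fun ℓ _ => by field_simp
    have hj_scaled : w * (1 - y j / w) = w - y j := by field_simp
    linear_combination -hsum - v j * hj_scaled - hsum_scaled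
  refine ⟨?_, div_le_div_of_nonneg_left (hy j) ?_ ?_⟩
  · rw [hscale, ← div_div]
    exact div_le_sum_bernoulliProductWeight_mul_div hp (fun ℓ => (hv ℓ).1.le) j
  · nlinarith [(hv j).1, hyw j]
  · nlinarith [(hv j).1, (hv j).2, hy j, hyw j]
end

section
/- Let V be a finite set, and suppose v_ℓ ∈ (0,1) and y_ℓ ≥ 0 for each ℓ ∈ V and w > 0 satisfy w + Σ_{ℓ∈V} v_ℓ y_ℓ = 1 and y_ℓ ≤ w for all ℓ ∈ V. Let (X_ℓ)_{ℓ∈V} be {0,1}-valued random variables with P(X_ℓ = 1) = y_ℓ/w for every ℓ, and fix j ∈ V such that, whenever P(X_j = 1) > 0, the negative correlation property P(X_ℓ = 1 ∣ X_j = 1) ≤ y_ℓ/w holds for every ℓ ≠ j. Then E[X_j/(1 + Σ_{ℓ∈V} v_ℓ X_ℓ)] ≥ y_j/2. -/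
/-!
Let `P = Pr[j ∈ T] = y_j / w` and `S(T) = ∑_{ℓ ∈ T} v_ℓ`. Negative correlation bounds the
conditional mean of `S` given `j ∈ T` by `c = v_j + (1 - w) / w`, because
`∑_{ℓ ≠ j} v_ℓ y_ℓ ≤ 1 - w`. Since `t ↦ 1 / (1 + t)` is convex, Jensen's inequality
(via the tangent line at `c`) gives
`E[X_j / (1 + S)] ≥ P / (1 + c) = y_j / (1 + v_j w) ≥ y_j / 2`.
-/

open Finset

theorem sum_mul_sum_mem_eq_sum_mul_sum_ite {κ R : Type*} [Fintype κ] [DecidableEq κ]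
    [CommSemiring R] (p : Finset κ → R) (v : κ → R) :
    ∑ T, p T * ∑ ℓ ∈ T, v ℓ = ∑ ℓ, v ℓ * ∑ T, if ℓ ∈ T then p T else 0 := by
  simp_rw [mul_sum, mul_ite, mul_zero, ← sum_filter, mul_comm (p _)]
  exact sum_comm' fun T ℓ => by simp

theorem sum_ite_mem_mul_sum_le {κ : Type*} [Fintype κ] [DecidableEq κ]
    (p : Finset κ → ℝ) (v y : κ → ℝ) (w : ℝ) (j : κ)
    (hp : ∀ T, 0 ≤ p T) (hv : ∀ ℓ, 0 ≤ v ℓ) (hyj : 0 ≤ y j) (hw : 0 < w)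
    (hsum : w + ∑ ℓ, v ℓ * y ℓ = 1)
    (hcorr : (0 < ∑ T, if j ∈ T then p T else 0) → ∀ ℓ, ℓ ≠ j →
      (∑ T, if ℓ ∈ T ∧ j ∈ T then p T else 0) ≤
        y ℓ / w * ∑ T, if j ∈ T then p T else 0) :
    ∑ T, (if j ∈ T then p T else 0) * ∑ ℓ ∈ T, v ℓ ≤
      (∑ T, if j ∈ T then p T else 0) * (v j + (1 - w) / w) := by
  set P := ∑ T, if j ∈ T then p T else 0
  have hP : 0 ≤ P := sum_nonneg fun T _ => by split_ifs <;> simp [hp]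
  have hjoint : ∀ ℓ, (∑ T, if ℓ ∈ T ∧ j ∈ T then p T else 0) ≤
      y ℓ / w * P + if ℓ = j then P else 0 := by
    intro ℓ
    rcases eq_or_ne ℓ j with rfl | hne
    · simp only [and_self, if_true]
      have : 0 ≤ y ℓ / w * P := by positivity
      linarith
    · rw [if_neg hne, add_zero]
      rcases hP.eq_or_lt with hP0 | hPpos
      · have hJP : (∑ T, if ℓ ∈ T ∧ j ∈ T then p T else 0) ≤ P :=
          sum_le_sum fun T _ => by split_ifs <;> simp_all
        exact hJP.trans (by rw [← hP0, mul_zero])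
      · exact hcorr hPpos ℓ hne
  calc ∑ T, (if j ∈ T then p T else 0) * ∑ ℓ ∈ T, v ℓ
      = ∑ ℓ, v ℓ * ∑ T, if ℓ ∈ T ∧ j ∈ T then p T else 0 := by
        simp_rw [sum_mul_sum_mem_eq_sum_mul_sum_ite, ite_and]
    _ ≤ ∑ ℓ, v ℓ * (y ℓ / w * P + if ℓ = j then P else 0) :=
        sum_le_sum fun ℓ _ => mul_le_mul_of_nonneg_left (hjoint ℓ) (hv ℓ)
    _ = P / w * ∑ ℓ, v ℓ * y ℓ + v j * P := by
        simp only [mul_add, sum_add_distrib, mul_ite, mul_zero, sum_ite_eq', mem_univ, if_true,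
          mul_sum]
        congr 1
        exact sum_congr rfl fun ℓ _ => by ring
    _ = P * (v j + (1 - w) / w) := by
        rw [show ∑ ℓ, v ℓ * y ℓ = 1 - w by linarith]
        ring

theorem div_one_add_le_sum_div_one_add {ι : Type*} (s : Finset ι) (q x : ι → ℝ) {c : ℝ}
    (hc : -1 < c) (hq : ∀ i ∈ s, 0 ≤ q i) (hx : ∀ i ∈ s, -1 < x i)
    (hmean : ∑ i ∈ s, q i * x i ≤ (∑ i ∈ s, q i) * c) :
    (∑ i ∈ s, q i) / (1 + c) ≤ ∑ i ∈ s, q i / (1 + x i) := by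
  have hc' : 0 < 1 + c := by linarith
  -- tangent line of the convex function `t ↦ 1 / (1 + t)` at `c`
  have tangent : ∀ i ∈ s, q i * (1 + 2 * c - x i) / (1 + c) ^ 2 ≤ q i / (1 + x i) := by
    intro i hi
    have hxi : 0 < 1 + x i := by linarith [hx i hi]
    rw [div_le_div_iff₀ (by positivity) hxi]
    nlinarith [mul_nonneg (hq i hi) (sq_nonneg (x i - c))]
  calc (∑ i ∈ s, q i) / (1 + c)
      = ((∑ i ∈ s, q i) * (1 + 2 * c) - (∑ i ∈ s, q i) * c) / (1 + c) ^ 2 := by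
        field_simp; ring
    _ ≤ ((∑ i ∈ s, q i) * (1 + 2 * c) - ∑ i ∈ s, q i * x i) / (1 + c) ^ 2 := by gcongr
    _ = ∑ i ∈ s, q i * (1 + 2 * c - x i) / (1 + c) ^ 2 := by
        simp only [← sum_div, mul_sub, sum_sub_distrib, sum_mul]
    _ ≤ ∑ i ∈ s, q i / (1 + x i) := sum_le_sum tangent

theorem dependent_rounding_expectation_bound_general
    {κ : Type*} [Fintype κ] [DecidableEq κ]
    (v y : κ → ℝ) (w : ℝ)
    (hv : ∀ ℓ, 0 < v ℓ ∧ v ℓ < 1) (hy : ∀ ℓ, 0 ≤ y ℓ) (hw : 0 < w)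
    (hsum : w + ∑ ℓ : κ, v ℓ * y ℓ = 1)
    (μ : PMF (Finset κ))
    (hmarg : ∀ ℓ : κ, (∑ T : Finset κ, if ℓ ∈ T then (μ T).toReal else 0) = y ℓ / w)
    (j : κ)
    (hnegcor : (0 < ∑ T : Finset κ, if j ∈ T then (μ T).toReal else 0) →
      ∀ ℓ : κ, ℓ ≠ j →
        (∑ T : Finset κ, if ℓ ∈ T ∧ j ∈ T then (μ T).toReal else 0) ≤
          (y ℓ / w) * ∑ T : Finset κ, if j ∈ T then (μ T).toReal else 0) :
    y j / 2 ≤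
      ∑ T : Finset κ, (μ T).toReal *
        ((if j ∈ T then (1 : ℝ) else 0) / (1 + ∑ ℓ ∈ T, v ℓ)) := by
  have hv0 : ∀ ℓ, 0 ≤ v ℓ := fun ℓ => (hv ℓ).1.le
  have hw1 : w ≤ 1 := by
    linarith [sum_nonneg (s := univ) fun ℓ _ => mul_nonneg (hv0 ℓ) (hy ℓ)]
  have hmean := sum_ite_mem_mul_sum_le (fun T => (μ T).toReal) v y w j
    (fun _ => ENNReal.toReal_nonneg) hv0 (hy j) hw hsum hnegcor
  have hc : -1 < v j + (1 - w) / w := by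
    linarith [hv0 j, div_nonneg (sub_nonneg.2 hw1) hw.le]
  have hvw : 0 ≤ v j * w := mul_nonneg (hv0 j) hw.le
  have hvw1 : v j * w ≤ 1 := mul_le_one₀ (hv j).2.le hw.le hw1
  have hvw_pos : 0 < 1 + v j * w := by linarith
  calc y j / 2 ≤ y j / (1 + v j * w) :=
        div_le_div_of_nonneg_left (hy j) hvw_pos (by linarith)
    _ = (∑ T, if j ∈ T then (μ T).toReal else 0) / (1 + (v j + (1 - w) / w)) := by
        rw [hmarg j, show 1 + (v j + (1 - w) / w) = (1 + v j * w) / w by field_simp; ring,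
          div_div_div_cancel_right₀ hw.ne']
    _ ≤ ∑ T, (if j ∈ T then (μ T).toReal else 0) / (1 + ∑ ℓ ∈ T, v ℓ) :=
        div_one_add_le_sum_div_one_add _ _ _ hc (fun T _ => by positivity)
          (fun T _ => by linarith [sum_nonneg fun ℓ (_ : ℓ ∈ T) => hv0 ℓ]) hmean
    _ = _ := sum_congr rfl fun T _ => by split_ifs <;> simp [div_eq_mul_inv]

/-- **Proposition 3.7, dependent rounding.** For `{0,1}`-valued random
variables (encoded by the distribution `μ` of the random set `T = {ℓ : X_ℓ = 1}`) with
marginals `y_ℓ / w` and negative correlation with the fixed index `j`,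
`E[X_j / (1 + ∑ v_ℓ X_ℓ)] ≥ y_j / 2`. -/
theorem dependent_rounding_expectation_bound
    {κ : Type*} [Fintype κ] [DecidableEq κ]
    (v y : κ → ℝ) (w : ℝ)
    (hv : ∀ ℓ, 0 < v ℓ ∧ v ℓ < 1) (hy : ∀ ℓ, 0 ≤ y ℓ) (hw : 0 < w)
    (hsum : w + ∑ ℓ : κ, v ℓ * y ℓ = 1) (hyw : ∀ ℓ, y ℓ ≤ w)
    (μ : PMF (Finset κ))
    (hmarg : ∀ ℓ : κ, (∑ T : Finset κ, if ℓ ∈ T then (μ T).toReal else 0) = y ℓ / w)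
    (j : κ)
    (hnegcor : (0 < ∑ T : Finset κ, if j ∈ T then (μ T).toReal else 0) →
      ∀ ℓ : κ, ℓ ≠ j →
        (∑ T : Finset κ, if ℓ ∈ T ∧ j ∈ T then (μ T).toReal else 0) ≤
          (y ℓ / w) * ∑ T : Finset κ, if j ∈ T then (μ T).toReal else 0) :
    y j / 2 ≤
      ∑ T : Finset κ, (μ T).toReal *
        ((if j ∈ T then (1 : ℝ) else 0) / (1 + ∑ ℓ ∈ T, v ℓ)) :=
  dependent_rounding_expectation_bound_general v y w hv hy hw hsum μ hmarg j hnegcor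
end

section
/- Let N be a finite set, let v_i ≥ 0 be constants, and let (Ŷ_i)_{i∈N} be mutually independent real random variables with v_i Ŷ_i ∈ [0,1] almost surely for every i ∈ N. Let z ∈ [0,1] satisfy Σ_{i∈N} v_i E[Ŷ_i] ≥ z/2. Then E[1 − ∏_{i∈N}(1 − v_i Ŷ_i)] ≥ (1 − 1/e)·z/2. -/
/-!
Put `X i = v i * Y i` and `a i = E[X i]`. By independence
`E[∏ (1 - X i)] = ∏ (1 - a i) ≤ exp (-∑ a i) ≤ exp (-z/2)`, and on `[0, 1]` the concave
function `x ↦ 1 - exp (-x)` lies above its chord `x ↦ (1 - e⁻¹) x`.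
-/

open MeasureTheory ProbabilityTheory

namespace Real

theorem one_sub_inv_exp_one_mul_le_one_sub_exp_neg_s12 {x : ℝ} (h0 : 0 ≤ x) (h1 : x ≤ 1) :
    (1 - (exp 1)⁻¹) * x ≤ 1 - exp (-x) := by
  have hconv := convexOn_exp.2 (Set.mem_univ (-1)) (Set.mem_univ 0) h0 (sub_nonneg.2 h1)
    (add_sub_cancel x 1)
  simp only [smul_eq_mul, mul_neg, mul_one, mul_zero, add_zero, exp_zero, exp_neg 1] at hconv
  linarith

theorem prod_one_sub_le_exp_neg_sum_s12 {ι : Type*} (s : Finset ι) {a : ι → ℝ}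
    (ha : ∀ i ∈ s, a i ≤ 1) : ∏ i ∈ s, (1 - a i) ≤ exp (-∑ i ∈ s, a i) := by
  rw [← Finset.sum_neg_distrib, exp_sum]
  refine Finset.prod_le_prod (fun i hi => sub_nonneg.2 (ha i hi)) fun i _ => ?_
  linarith [add_one_le_exp (-a i)]

end Real

theorem one_sub_inv_exp_one_mul_le_one_sub_prod_one_sub {ι : Type*} (s : Finset ι) {a : ι → ℝ}
    (ha : ∀ i ∈ s, a i ≤ 1) {x : ℝ} (hx0 : 0 ≤ x) (hx1 : x ≤ 1) (hsum : x ≤ ∑ i ∈ s, a i) :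
    (1 - (Real.exp 1)⁻¹) * x ≤ 1 - ∏ i ∈ s, (1 - a i) :=
  calc (1 - (Real.exp 1)⁻¹) * x ≤ 1 - Real.exp (-x) :=
        Real.one_sub_inv_exp_one_mul_le_one_sub_exp_neg_s12 hx0 hx1
    _ ≤ 1 - Real.exp (-∑ i ∈ s, a i) := by gcongr
    _ ≤ 1 - ∏ i ∈ s, (1 - a i) := by gcongr; exact Real.prod_one_sub_le_exp_neg_sum_s12 s ha

section Independent

variable {Ω ι : Type*} [MeasurableSpace Ω] {μ : Measure Ω} [Fintype ι] {X : ι → Ω → ℝ}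

theorem ProbabilityTheory.iIndepFun.integral_prod_one_sub (hX : iIndepFun X μ)
    (hint : ∀ i, Integrable (X i) μ) :
    ∫ ω, ∏ i, (1 - X i ω) ∂μ = ∏ i, (1 - ∫ ω, X i ω ∂μ) := by
  have := hX.isProbabilityMeasure
  have hindep : iIndepFun (fun i ω => 1 - X i ω) μ :=
    hX.comp (fun _ x => 1 - x) fun _ => by fun_prop
  rw [hindep.integral_fun_prod_eq_prod_integral fun i =>
    ((integrable_const 1).sub (hint i)).aestronglyMeasurable]
  refine Finset.prod_congr rfl fun i _ => ?_
  rw [integral_sub (integrable_const 1) (hint i), integral_const, probReal_univ, one_smul]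

theorem one_sub_inv_exp_one_mul_le_integral_one_sub_prod_one_sub (hX : iIndepFun X μ)
    (hmeas : ∀ i, AEStronglyMeasurable (X i) μ) (hunit : ∀ i, ∀ᵐ ω ∂μ, X i ω ∈ Set.Icc 0 1)
    {x : ℝ} (hx0 : 0 ≤ x) (hx1 : x ≤ 1) (hsum : x ≤ ∑ i, ∫ ω, X i ω ∂μ) :
    (1 - (Real.exp 1)⁻¹) * x ≤ ∫ ω, (1 - ∏ i, (1 - X i ω)) ∂μ := by
  have := hX.isProbabilityMeasure
  have hnorm : ∀ i, ∀ᵐ ω ∂μ, ‖X i ω‖ ≤ 1 := fun i => by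
    filter_upwards [hunit i] with ω hω
    rw [Real.norm_of_nonneg hω.1]
    exact hω.2
  have hint : ∀ i, Integrable (X i) μ := fun i => .of_bound (hmeas i) 1 (hnorm i)
  have hprod_int : Integrable (fun ω => ∏ i, (1 - X i ω)) μ := by
    refine .of_bound (Finset.aestronglyMeasurable_fun_prod _ fun i _ =>
      ((integrable_const 1).sub (hint i)).aestronglyMeasurable) 1 ?_
    filter_upwards [ae_all_iff.2 hunit] with ω hω
    have hfactor : ∀ i ∈ Finset.univ, 0 ≤ 1 - X i ω := fun i _ => sub_nonneg.2 (hω i).2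
    rw [Real.norm_of_nonneg (Finset.prod_nonneg hfactor)]
    exact Finset.prod_le_one hfactor fun i _ => sub_le_self _ (hω i).1
  have hmean_le : ∀ i ∈ Finset.univ, ∫ ω, X i ω ∂μ ≤ 1 := fun i _ => by
    simpa using (le_abs_self _).trans (norm_integral_le_of_norm_le_const (hnorm i))
  rw [integral_sub (integrable_const 1) hprod_int, integral_const, probReal_univ, one_smul,
    hX.integral_prod_one_sub hint]
  exact one_sub_inv_exp_one_mul_le_one_sub_prod_one_sub _ hmean_le hx0 hx1 hsum

end Independent

theorem independent_products_expectation_bound_general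
    {ι : Type*} [Fintype ι] {Ω : Type*} [MeasurableSpace Ω]
    (μ : Measure Ω)
    (v : ι → ℝ)
    (Y : ι → Ω → ℝ) (hmeas : ∀ i, Measurable (Y i))
    (hindep : iIndepFun (m := fun _ => Real.measurableSpace) Y μ)
    (hbdd : ∀ i, ∀ᵐ ω ∂μ, v i * Y i ω ∈ Set.Icc (0 : ℝ) 1)
    (z : ℝ) (hz : z ∈ Set.Icc (0 : ℝ) 1)
    (hmean : z / 2 ≤ ∑ i : ι, v i * ∫ ω, Y i ω ∂μ) :
    (1 - (Real.exp 1)⁻¹) * z / 2 ≤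
      ∫ ω, (1 - ∏ i : ι, (1 - v i * Y i ω)) ∂μ := by
  have hX : iIndepFun (fun i ω => v i * Y i ω) μ :=
    hindep.comp (fun i y => v i * y) fun i => by fun_prop
  rw [mul_div_assoc]
  refine one_sub_inv_exp_one_mul_le_integral_one_sub_prod_one_sub hX
    (fun i => ((hmeas i).const_mul (v i)).aestronglyMeasurable) hbdd
    (by linarith [hz.1]) (by linarith [hz.2]) ?_
  simpa only [integral_const_mul] using hmean

/-- For mutually independent random variables `Ŷ_i` with
`v_i Ŷ_i ∈ [0,1]` a.s. and `∑_i v_i E[Ŷ_i] ≥ z/2` with `z ∈ [0,1]`, one has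
`E[1 − ∏_i (1 − v_i Ŷ_i)] ≥ (1 − 1/e)·z/2`. -/
theorem independent_products_expectation_bound
    {ι : Type*} [Fintype ι] {Ω : Type*} [MeasurableSpace Ω]
    (μ : Measure Ω) [IsProbabilityMeasure μ]
    (v : ι → ℝ) (hv : ∀ i, 0 ≤ v i)
    (Y : ι → Ω → ℝ) (hmeas : ∀ i, Measurable (Y i))
    (hindep : iIndepFun (m := fun _ => Real.measurableSpace) Y μ)
    (hbdd : ∀ i, ∀ᵐ ω ∂μ, v i * Y i ω ∈ Set.Icc (0 : ℝ) 1)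
    (z : ℝ) (hz : z ∈ Set.Icc (0 : ℝ) 1)
    (hmean : z / 2 ≤ ∑ i : ι, v i * ∫ ω, Y i ω ∂μ) :
    (1 - (Real.exp 1)⁻¹) * z / 2 ≤
      ∫ ω, (1 - ∏ i : ι, (1 - v i * Y i ω)) ∂μ :=
  independent_products_expectation_bound_general μ v Y hmeas hindep hbdd z hz hmean
end

section
/- Let U_0, U_1, …, U_n be real-valued random variables on a common probability space such that P(U_i = U_k) = 0 for all i ≠ k in {0,1,…,n}. For C ⊆ {1,…,n} define the demand function Q(C) = P(there exists i ∈ C with U_i = max{U_k : k ∈ C ∪ {0}}). Then Q is monotone nondecreasing and submodular on subsets of {1,…,n}. -/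
/-!
Off the null set of ties, the best alternative of `C ∪ {0}` lies in `C` exactly when some
alternative of `C` strictly beats the outside option `0`. Hence `Q C` is the measure of the union
of the events `{U 0 < U i}`, `i ∈ C`: a coverage function, which is monotone, and submodular by
`μ (T ∪ S) = μ T + μ S - μ (T ∩ S)`.
-/

open MeasureTheory

section

variable {Ω : Type*} [MeasurableSpace Ω] {μ : Measure Ω}

theorem measureReal_union_sub_le_of_subset [IsFiniteMeasure μ] {s s' t : Set Ω}
    (ht : MeasurableSet t) (hss' : s ⊆ s') :
    μ.real (t ∪ s') - μ.real s' ≤ μ.real (t ∪ s) - μ.real s := by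
  have h := measureReal_union_add_inter' (μ := μ) (t := s) ht
  have h' := measureReal_union_add_inter' (μ := μ) (t := s') ht
  have hinter : μ.real (t ∩ s) ≤ μ.real (t ∩ s') :=
    measureReal_mono (Set.inter_subset_inter_right t hss')
  linarith

theorem exists_le_and_forall_le_iff_exists_le {ι : Type*} (C : Finset ι) (a : ℝ) (v : ι → ℝ) :
    (∃ i ∈ C, a ≤ v i ∧ ∀ j ∈ C, v j ≤ v i) ↔ ∃ i ∈ C, a ≤ v i := by
  refine ⟨fun ⟨i, hi, hai, _⟩ => ⟨i, hi, hai⟩, fun ⟨i, hi, hai⟩ => ?_⟩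
  obtain ⟨j, hj, hmax⟩ := C.exists_max_image v ⟨i, hi⟩
  exact ⟨j, hj, hai.trans (hmax i hi), hmax⟩

theorem measure_exists_max_eq_measure_exists_lt {ι : Type*} (C : Finset ι) (u₀ : Ω → ℝ)
    (v : ι → Ω → ℝ) (hties : ∀ i ∈ C, μ {ω | u₀ ω = v i ω} = 0) :
    μ {ω | ∃ i ∈ C, u₀ ω ≤ v i ω ∧ ∀ j ∈ C, v j ω ≤ v i ω} = μ {ω | ∃ i ∈ C, u₀ ω < v i ω} := by
  refine measure_congr (Filter.eventuallyEq_set.2 ?_)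
  have hne : ∀ᵐ ω ∂μ, ∀ i ∈ C, u₀ ω ≠ v i ω :=
    (ae_ball_iff C.countable_toSet).2 fun i hi => measure_eq_zero_iff_ae_notMem.1 (hties i hi)
  filter_upwards [hne] with ω hω
  simp only [exists_le_and_forall_le_iff_exists_le]
  exact ⟨fun ⟨i, hi, hle⟩ => ⟨i, hi, hle.lt_of_ne (hω i hi)⟩,
    fun ⟨i, hi, hlt⟩ => ⟨i, hi, hlt.le⟩⟩

end

/-- The demand function of a random-utility-based choice model is
monotone nondecreasing and submodular: with utilities `U_0, U_1, …, U_n` having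
pairwise-ties of probability zero, setting
`Q(C) = P(∃ i ∈ C, U_i = max{U_k : k ∈ C ∪ {0}})` gives a monotone submodular set
function on subsets of `{1,…,n}`. -/
theorem rum_demand_monotone_submodular
    {Ω : Type*} [MeasurableSpace Ω] (μ : Measure Ω) [IsProbabilityMeasure μ]
    (n : ℕ) (U : Fin (n + 1) → Ω → ℝ) (hU : ∀ k, Measurable (U k))
    (hties : ∀ i k : Fin (n + 1), i ≠ k → μ {ω | U i ω = U k ω} = 0)
    (Q : Finset (Fin n) → ℝ)
    (hQ : ∀ C : Finset (Fin n),
      Q C = (μ {ω | ∃ i ∈ C,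
        ∀ k ∈ insert (0 : Fin (n + 1)) (C.image Fin.succ), U k ω ≤ U i.succ ω}).toReal) :
    (∀ A B : Finset (Fin n), A ⊆ B → Q A ≤ Q B) ∧
    (∀ (A B : Finset (Fin n)) (e : Fin n), A ⊆ B → e ∉ B →
      Q (insert e B) - Q B ≤ Q (insert e A) - Q A) := by
  set beats : Fin n → Set Ω := fun i => {ω | U 0 ω < U i.succ ω}
  have hQ_eq : ∀ C, Q C = μ.real (⋃ i ∈ C, beats i) := by
    intro C
    have hevent := measure_exists_max_eq_measure_exists_lt C (U 0) (fun i => U i.succ)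
      fun i _ => hties 0 i.succ (Fin.succ_ne_zero i).symm
    simp only [hQ, Finset.forall_mem_insert, Finset.forall_mem_image, Measure.real]
    rw [hevent]
    congr 2
    ext ω
    simp [beats]
  refine ⟨fun A B hAB => ?_, fun A B e hAB _ => ?_⟩
  · simp only [hQ_eq]
    exact measureReal_mono (Set.biUnion_subset_biUnion_left hAB) (measure_ne_top μ _)
  · simp only [hQ_eq, Finset.set_biUnion_insert]
    exact measureReal_union_sub_le_of_subset (measurableSet_lt (hU 0) (hU e.succ))
      (Set.biUnion_subset_biUnion_left hAB)
end
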